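/- arXiv:math/0010157 — 9 statements merged into one kernel-verified Lean document; each statement's English description precedes it below -/
import Mathlib

section
/- Fix an integer n ≥ 1. For every complex number α and every real h > 0, the series defining F_n(α,h) converges absolutely, the function h ↦ F_n(α,h) is infinitely differentiable on (0,∞), and, denoting by D the differential operator (Dφ)(h) := −(h/(n+1))·φ'(h), its (n+1)-fold iterate satisfies D^{n+1}(F_n(α,·))(h) = h^{−(n+1)}·F_n(α,h) + α^{n+1}·exp(−(n+1)·α·log h)·(Γ(α+1))^{−(n+1)}. In particular, modulo α^{n+1} the function F_n(α,·) satisfies the hypergeometric differential equation (−(h/(n+1))·d/dh)^{n+1} s = h^{−(n+1)}·s. -/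
open Complex

/-- The generating series `F_n(α,h) = h^{-(n+1)α} Σ_d h^{-(n+1)d} Γ(α+d+1)^{-(n+1)}`
of hypergeometric type. -/
noncomputable def mirrorF (n : ℕ) (α : ℂ) (h : ℝ) : ℂ :=
  Complex.exp (-((n : ℂ) + 1) * α * (Real.log h : ℂ)) *
    ∑' d : ℕ, ((h : ℂ) ^ ((n + 1) * d))⁻¹ * ((Complex.Gamma (α + d + 1))⁻¹) ^ (n + 1)

/-- The differential operator `(Dφ)(h) = -(h/(n+1))·φ'(h)`. -/
noncomputable def mirrorD (n : ℕ) (φ : ℝ → ℂ) : ℝ → ℂ :=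
  fun h => -((h : ℂ) / ((n : ℂ) + 1)) * deriv φ h

namespace MirrorODE

/-- Reciprocal Gamma recurrence, valid everywhere. -/
lemma mul_inv_gamma_succ (z : ℂ) : z * (Complex.Gamma (z + 1))⁻¹ = (Complex.Gamma z)⁻¹ := by
  rcases eq_or_ne z 0 with hz | hz
  · simp [hz, Complex.Gamma_zero]
  · rw [Complex.Gamma_add_one z hz, mul_inv, ← mul_assoc, mul_inv_cancel₀ hz, one_mul]

/-- Master summability lemma: reciprocal Gamma beats polynomial times geometric. -/
lemma master (n : ℕ) (α : ℂ) (k : ℕ) {r : ℝ} (hr : 0 < r) :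
    Summable (fun d : ℕ =>
      ((d : ℝ) + 1) ^ k * r ^ d * ‖(Complex.Gamma (α + d + 1))⁻¹‖ ^ (n + 1)) := by
  set M : ℝ := max 1 (2 ^ (k + 1) * r) with hMdef
  have hM1 : (1 : ℝ) ≤ M := le_max_left _ _
  have hM2 : 2 ^ (k + 1) * r ≤ M := le_max_right _ _
  obtain ⟨D, hD⟩ := exists_nat_ge (‖α‖ + M)
  apply summable_of_ratio_norm_eventually_le (r := (1:ℝ) / 2) (by norm_num)
  filter_upwards [Filter.eventually_ge_atTop D] with d hd
  have hdD : (D : ℝ) ≤ (d : ℝ) := by exact_mod_cast hd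
  have h1 : ‖((d : ℂ) + 1)‖ = (d : ℝ) + 1 := by
    rw [show ((d : ℂ) + 1) = (((d : ℝ) + 1 : ℝ) : ℂ) by push_cast; ring, Complex.norm_real]
    rw [Real.norm_of_nonneg (by positivity)]
  have htri : ‖((d : ℂ) + 1)‖ ≤ ‖α + (d : ℂ) + 1‖ + ‖α‖ := by
    calc ‖((d : ℂ) + 1)‖ = ‖(α + (d : ℂ) + 1) - α‖ := by ring_nf
      _ ≤ ‖α + (d : ℂ) + 1‖ + ‖α‖ := norm_sub_le _ _
  have hnorm : M ≤ ‖α + (d : ℂ) + 1‖ := by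
    rw [h1] at htri; linarith
  have hzne : α + (d : ℂ) + 1 ≠ 0 := by
    intro h0
    rw [h0, norm_zero] at hnorm; linarith
  have hcast : α + ((d + 1 : ℕ) : ℂ) + 1 = (α + (d : ℂ) + 1) + 1 := by push_cast; ring
  have hGamma : ‖(Complex.Gamma (α + ((d + 1 : ℕ) : ℂ) + 1))⁻¹‖
      = ‖α + (d : ℂ) + 1‖⁻¹ * ‖(Complex.Gamma (α + (d : ℂ) + 1))⁻¹‖ := by
    rw [hcast, Complex.Gamma_add_one _ hzne, mul_inv, norm_mul, norm_inv]
  set N := ‖α + (d : ℂ) + 1‖ with hN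
  set G := ‖(Complex.Gamma (α + (d : ℂ) + 1))⁻¹‖ with hG
  have hNpos : (0 : ℝ) < N := lt_of_lt_of_le (by linarith) hnorm
  rw [Real.norm_of_nonneg (by positivity), Real.norm_of_nonneg (by positivity), hGamma]
  have sub2 : (N⁻¹) ^ (n + 1) ≤ (2 ^ (k + 1) * r)⁻¹ := by
    calc (N⁻¹) ^ (n + 1) ≤ (N⁻¹) ^ 1 := by
          apply pow_le_pow_of_le_one (by positivity) _ (by omega)
          rw [inv_le_one_iff₀]; right; linarith
      _ = N⁻¹ := pow_one _
      _ ≤ (2 ^ (k + 1) * r)⁻¹ := by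
          apply inv_anti₀ (by positivity); linarith
  calc (((d + 1 : ℕ) : ℝ) + 1) ^ k * r ^ (d + 1) * (N⁻¹ * G) ^ (n + 1)
      = (((d : ℝ) + 2) ^ k * (N⁻¹) ^ (n + 1) * r) * (r ^ d * G ^ (n + 1)) := by
        push_cast; rw [mul_pow]; ring
    _ ≤ ((2 ^ k * ((d : ℝ) + 1) ^ k) * (2 ^ (k + 1) * r)⁻¹ * r) * (r ^ d * G ^ (n + 1)) := by
        have sub1 : ((d : ℝ) + 2) ^ k ≤ 2 ^ k * ((d : ℝ) + 1) ^ k := by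
          rw [← mul_pow]
          apply pow_le_pow_left₀ (by positivity) (by linarith)
        gcongr
    _ = 1 / 2 * (((d : ℝ) + 1) ^ k * r ^ d * G ^ (n + 1)) := by
        rw [pow_succ]
        field_simp


/-- The `d`-th term of the series for the `j`-th iterate of the operator `D`. -/
noncomputable def mterm (n : ℕ) (α : ℂ) (j d : ℕ) (h : ℝ) : ℂ :=
  (α + d) ^ j * Complex.exp (-((n : ℂ) + 1) * (α + d) * (Real.log h : ℂ)) *
    ((Complex.Gamma (α + d + 1))⁻¹) ^ (n + 1)

noncomputable def mG (n : ℕ) (α : ℂ) (j : ℕ) (h : ℝ) : ℂ := ∑' d : ℕ, mterm n α j d h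

lemma mterm_succ (n : ℕ) (α : ℂ) (j d : ℕ) (h : ℝ) :
    mterm n α (j + 1) d h = (α + d) * mterm n α j d h := by
  unfold mterm; rw [pow_succ]; ring

lemma norm_mterm (n : ℕ) (α : ℂ) (j d : ℕ) (x : ℝ) :
    ‖mterm n α j d x‖ = ‖α + (d : ℂ)‖ ^ j *
      (Real.exp (-((n : ℝ) + 1) * Real.log x * α.re) *
        Real.exp (-((n : ℝ) + 1) * Real.log x) ^ d) *
      ‖(Complex.Gamma (α + d + 1))⁻¹‖ ^ (n + 1) := by
  unfold mterm
  rw [norm_mul, norm_mul, norm_pow, norm_pow]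
  simp only [Complex.norm_exp]
  congr 2
  have : (-((n : ℂ) + 1) * (α + (d : ℂ)) * (Real.log x : ℂ))
      = (((-((n : ℝ) + 1) * Real.log x : ℝ)) : ℂ) * (α + (d : ℂ)) := by push_cast; ring
  rw [this]
  have hre : ((((-((n : ℝ) + 1) * Real.log x : ℝ)) : ℂ) * (α + (d : ℂ))).re
      = (-((n : ℝ) + 1) * Real.log x) * (α.re + d) := by
    simp [Complex.mul_re]
  rw [hre, show (-((n : ℝ) + 1) * Real.log x) * (α.re + d)
    = -((n : ℝ) + 1) * Real.log x * α.re + (d : ℝ) * (-((n : ℝ) + 1) * Real.log x) by ring,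
    Real.exp_add, Real.exp_nat_mul]

lemma norm_mterm_le (n : ℕ) (α : ℂ) (j d : ℕ) {a b x : ℝ} (ha : 0 < a) (hax : a ≤ x)
    (hxb : x ≤ b) :
    ‖mterm n α j d x‖ ≤
      ((‖α‖ + 1) ^ j * Real.exp (((n : ℝ) + 1) * |α.re| * max |Real.log a| |Real.log b|)) *
        (((d : ℝ) + 1) ^ j * Real.exp (-((n : ℝ) + 1) * Real.log a) ^ d *
          ‖(Complex.Gamma (α + d + 1))⁻¹‖ ^ (n + 1)) := by
  have hx : 0 < x := lt_of_lt_of_le ha hax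
  rw [norm_mterm]
  have hL1 : Real.log a ≤ Real.log x := Real.log_le_log ha hax
  have hL2 : Real.log x ≤ Real.log b := Real.log_le_log hx hxb
  have habs : |Real.log x| ≤ max |Real.log a| |Real.log b| := abs_le_max_abs_abs hL1 hL2
  have b1 : ‖α + (d : ℂ)‖ ^ j ≤ ((‖α‖ + 1) * ((d : ℝ) + 1)) ^ j := by
    apply pow_le_pow_left₀ (norm_nonneg _)
    calc ‖α + (d : ℂ)‖ ≤ ‖α‖ + ‖((d : ℕ) : ℂ)‖ := norm_add_le _ _
      _ = ‖α‖ + d := by rw [Complex.norm_natCast]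
      _ ≤ (‖α‖ + 1) * ((d : ℝ) + 1) := by nlinarith [norm_nonneg α]
  have b2 : Real.exp (-((n : ℝ) + 1) * Real.log x * α.re)
      ≤ Real.exp (((n : ℝ) + 1) * |α.re| * max |Real.log a| |Real.log b|) := by
    apply Real.exp_le_exp.mpr
    calc -((n : ℝ) + 1) * Real.log x * α.re ≤ |(-((n : ℝ) + 1)) * Real.log x * α.re| :=
          le_abs_self _
      _ = ((n : ℝ) + 1) * |Real.log x| * |α.re| := by
          rw [abs_mul, abs_mul, abs_neg, _root_.abs_of_nonneg (by positivity : (0:ℝ) ≤ (n : ℝ) + 1)]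
      _ ≤ ((n : ℝ) + 1) * (max |Real.log a| |Real.log b|) * |α.re| := by gcongr
      _ = ((n : ℝ) + 1) * |α.re| * max |Real.log a| |Real.log b| := by ring
  have b3 : Real.exp (-((n : ℝ) + 1) * Real.log x) ^ d
      ≤ Real.exp (-((n : ℝ) + 1) * Real.log a) ^ d := by
    apply pow_le_pow_left₀ (Real.exp_nonneg _)
    exact Real.exp_le_exp.mpr (by nlinarith)
  calc ‖α + (d : ℂ)‖ ^ j *
      (Real.exp (-((n : ℝ) + 1) * Real.log x * α.re) *
        Real.exp (-((n : ℝ) + 1) * Real.log x) ^ d) *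
      ‖(Complex.Gamma (α + d + 1))⁻¹‖ ^ (n + 1)
      ≤ ((‖α‖ + 1) * ((d : ℝ) + 1)) ^ j *
        (Real.exp (((n : ℝ) + 1) * |α.re| * max |Real.log a| |Real.log b|) *
          Real.exp (-((n : ℝ) + 1) * Real.log a) ^ d) *
        ‖(Complex.Gamma (α + d + 1))⁻¹‖ ^ (n + 1) := by gcongr
    _ = _ := by rw [mul_pow]; ring


lemma summable_norm_mterm (n : ℕ) (α : ℂ) (j : ℕ) {h : ℝ} (hh : 0 < h) :
    Summable (fun d : ℕ => ‖mterm n α j d h‖) := by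
  apply Summable.of_nonneg_of_le (fun d => norm_nonneg _)
    (fun d => norm_mterm_le n α j d hh le_rfl le_rfl)
  exact (master n α j (Real.exp_pos _)).mul_left _

lemma summable_mterm (n : ℕ) (α : ℂ) (j : ℕ) {h : ℝ} (hh : 0 < h) :
    Summable (fun d : ℕ => mterm n α j d h) :=
  (summable_norm_mterm n α j hh).of_norm

lemma hasDerivAt_mterm (n : ℕ) (α : ℂ) (j d : ℕ) {x : ℝ} (hx : 0 < x) :
    HasDerivAt (fun y : ℝ => mterm n α j d y)
      (-((n : ℂ) + 1) / x * mterm n α (j + 1) d x) x := by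
  have hlog : HasDerivAt (fun y : ℝ => ((Real.log y : ℝ) : ℂ)) ((x⁻¹ : ℝ) : ℂ) x :=
    (Real.hasDerivAt_log hx.ne').ofReal_comp
  have h2 := (hlog.const_mul (-((n : ℂ) + 1) * (α + d))).cexp
  have h4 := (h2.const_mul ((α + (d : ℂ)) ^ j)).mul_const
    (((Complex.Gamma (α + d + 1))⁻¹) ^ (n + 1))
  have hfn : (fun y : ℝ => mterm n α j d y)
      = fun y : ℝ => (α + (d : ℂ)) ^ j *
          Complex.exp (-((n : ℂ) + 1) * (α + d) * ((Real.log y : ℝ) : ℂ)) *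
          ((Complex.Gamma (α + d + 1))⁻¹) ^ (n + 1) := rfl
  rw [hfn]
  refine h4.congr_deriv ?_
  rw [mterm_succ]
  unfold mterm
  have hxc : (x : ℂ) ≠ 0 := by exact_mod_cast hx.ne'
  push_cast
  field_simp

lemma hasDerivAt_mG (n : ℕ) (α : ℂ) (j : ℕ) {h : ℝ} (hh : 0 < h) :
    HasDerivAt (mG n α j) (-((n : ℂ) + 1) / h * mG n α (j + 1) h) h := by
  set a : ℝ := h / 2 with hadef
  set b : ℝ := 2 * h with hbdef
  have ha : 0 < a := by positivity
  have hmem : h ∈ Set.Ioo a b := by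
    constructor
    · rw [hadef]; linarith
    · rw [hbdef]; linarith
  set C : ℝ := (((n : ℝ) + 1) * a⁻¹) *
      ((‖α‖ + 1) ^ (j + 1) *
        Real.exp (((n : ℝ) + 1) * |α.re| * max |Real.log a| |Real.log b|)) with hCdef
  have hu : Summable (fun d : ℕ => C *
      (((d : ℝ) + 1) ^ (j + 1) * Real.exp (-((n : ℝ) + 1) * Real.log a) ^ d *
        ‖(Complex.Gamma (α + d + 1))⁻¹‖ ^ (n + 1))) :=
    (master n α (j + 1) (Real.exp_pos _)).mul_left _
  have hderiv : ∀ (d : ℕ) (x : ℝ), x ∈ Set.Ioo a b →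
      HasDerivAt (fun y : ℝ => mterm n α j d y)
        (-((n : ℂ) + 1) / x * mterm n α (j + 1) d x) x :=
    fun d x hx => hasDerivAt_mterm n α j d (lt_trans ha hx.1)
  have hbound : ∀ (d : ℕ) (x : ℝ), x ∈ Set.Ioo a b →
      ‖-((n : ℂ) + 1) / x * mterm n α (j + 1) d x‖ ≤ C *
        (((d : ℝ) + 1) ^ (j + 1) * Real.exp (-((n : ℝ) + 1) * Real.log a) ^ d *
          ‖(Complex.Gamma (α + d + 1))⁻¹‖ ^ (n + 1)) := by
    intro d x hx
    have hxpos : 0 < x := lt_trans ha hx.1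
    rw [norm_mul, norm_div, norm_neg]
    have h1 : ‖((n : ℂ) + 1)‖ = (n : ℝ) + 1 := by
      rw [show ((n : ℂ) + 1) = (((n : ℝ) + 1 : ℝ) : ℂ) by push_cast; ring, Complex.norm_real,
        Real.norm_of_nonneg (by positivity)]
    have h2 : ‖(x : ℂ)‖ = x := by
      rw [Complex.norm_real, Real.norm_of_nonneg hxpos.le]
    rw [h1, h2, hCdef]
    have hb1 : ((n : ℝ) + 1) / x ≤ ((n : ℝ) + 1) * a⁻¹ := by
      rw [div_eq_mul_inv]
      exact mul_le_mul_of_nonneg_left (inv_anti₀ ha hx.1.le) (by positivity)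
    calc ((n : ℝ) + 1) / x * ‖mterm n α (j + 1) d x‖
        ≤ (((n : ℝ) + 1) * a⁻¹) *
          (((‖α‖ + 1) ^ (j + 1) *
            Real.exp (((n : ℝ) + 1) * |α.re| * max |Real.log a| |Real.log b|)) *
            (((d : ℝ) + 1) ^ (j + 1) * Real.exp (-((n : ℝ) + 1) * Real.log a) ^ d *
              ‖(Complex.Gamma (α + d + 1))⁻¹‖ ^ (n + 1))) := by
          apply mul_le_mul hb1 (norm_mterm_le n α (j + 1) d ha hx.1.le hx.2.le)
            (norm_nonneg _) (by positivity)
      _ = _ := by ring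
  have := hasDerivAt_tsum_of_isPreconnected hu isOpen_Ioo
    (isPreconnected_Ioo (a := a) (b := b)) hderiv hbound hmem
    (summable_mterm n α j hh) hmem
  have htsum : (∑' d : ℕ, -((n : ℂ) + 1) / h * mterm n α (j + 1) d h)
      = -((n : ℂ) + 1) / h * mG n α (j + 1) h := tsum_mul_left
  rw [htsum] at this
  exact this


/-- `(h^m)⁻¹` as a complex exponential, for `h > 0`. -/
lemma hpow_exp (m : ℕ) {h : ℝ} (hh : 0 < h) :
    ((h : ℂ) ^ m)⁻¹ = Complex.exp (-(m : ℂ) * (Real.log h : ℂ)) := by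
  have h1 : (h : ℂ) = Complex.exp ((Real.log h : ℂ)) := by
    rw [← Complex.ofReal_exp, Real.exp_log hh]
  rw [h1, ← Complex.exp_nat_mul, ← Complex.exp_neg]
  congr 1
  ring

lemma mirrorF_eq_mG (n : ℕ) (α : ℂ) {h : ℝ} (hh : 0 < h) :
    mirrorF n α h = mG n α 0 h := by
  unfold mirrorF mG mterm
  rw [← tsum_mul_left]
  congr 1
  funext d
  rw [pow_zero, one_mul, hpow_exp ((n + 1) * d) hh, ← mul_assoc, ← Complex.exp_add]
  congr 2
  push_cast
  ring

lemma iterate_eq (n : ℕ) (α : ℂ) (j : ℕ) :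
    ∀ {h : ℝ}, 0 < h → (mirrorD n)^[j] (fun h' : ℝ => mirrorF n α h') h = mG n α j h := by
  induction j with
  | zero => intro h hh; simpa using mirrorF_eq_mG n α hh
  | succ j ih =>
    intro h hh
    rw [Function.iterate_succ_apply']
    show -((h : ℂ) / ((n : ℂ) + 1)) * deriv ((mirrorD n)^[j] (fun h' : ℝ => mirrorF n α h')) h
      = mG n α (j + 1) h
    have hder : deriv ((mirrorD n)^[j] (fun h' : ℝ => mirrorF n α h')) h
        = deriv (mG n α j) h := by
      apply Filter.EventuallyEq.deriv_eq
      filter_upwards [isOpen_Ioi.mem_nhds hh] with x hx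
      exact ih hx
    rw [hder, (hasDerivAt_mG n α j hh).deriv]
    have hν : ((n : ℂ) + 1) ≠ 0 := by
      have := Nat.cast_add_one_ne_zero (R := ℂ) n
      push_cast at this
      exact this
    have hhc : (h : ℂ) ≠ 0 := by exact_mod_cast hh.ne'
    have : -((h : ℂ) / ((n : ℂ) + 1)) * (-((n : ℂ) + 1) / h) = 1 := by
      field_simp
    rw [← mul_assoc, this, one_mul]

lemma mG_top (n : ℕ) (α : ℂ) {h : ℝ} (hh : 0 < h) :
    mG n α (n + 1) h = ((h : ℂ) ^ (n + 1))⁻¹ * mirrorF n α h +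
      α ^ (n + 1) * Complex.exp (-((n : ℂ) + 1) * α * (Real.log h : ℂ)) *
        ((Complex.Gamma (α + 1))⁻¹) ^ (n + 1) := by
  have hs := summable_mterm n α (n + 1) hh
  have h0 : mterm n α (n + 1) 0 h
      = α ^ (n + 1) * Complex.exp (-((n : ℂ) + 1) * α * (Real.log h : ℂ)) *
        ((Complex.Gamma (α + 1))⁻¹) ^ (n + 1) := by
    simp [mterm]
  have hshift : ∀ d : ℕ, mterm n α (n + 1) (d + 1) h
      = ((h : ℂ) ^ (n + 1))⁻¹ * mterm n α 0 d h := by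
    intro d
    have hz := mul_inv_gamma_succ (α + (d : ℂ) + 1)
    unfold mterm
    rw [hpow_exp (n + 1) hh, pow_zero, one_mul]
    rw [show Complex.exp (-((n : ℂ) + 1) * (α + ((d + 1 : ℕ) : ℂ)) * (Real.log h : ℂ))
      = Complex.exp (-(((n + 1 : ℕ) : ℂ)) * (Real.log h : ℂ)) *
        Complex.exp (-((n : ℂ) + 1) * (α + (d : ℂ)) * (Real.log h : ℂ)) by
        rw [← Complex.exp_add]; congr 1; push_cast; ring]
    rw [show α + ((d + 1 : ℕ) : ℂ) + 1 = (α + (d : ℂ) + 1) + 1 by push_cast; ring]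
    rw [← hz, mul_pow]
    push_cast
    ring
  rw [mG, Summable.tsum_eq_zero_add hs, h0]
  have htail : (∑' d : ℕ, mterm n α (n + 1) (d + 1) h)
      = ((h : ℂ) ^ (n + 1))⁻¹ * mirrorF n α h := by
    rw [tsum_congr hshift, tsum_mul_left, mirrorF_eq_mG n α hh]
    rfl
  rw [htail]
  ring


/-- The complex extension of the series. -/
noncomputable def mFC (n : ℕ) (α : ℂ) (z : ℂ) : ℂ :=
  ∑' d : ℕ, Complex.exp (-((n : ℂ) + 1) * (α + d) * Complex.log z) *
    ((Complex.Gamma (α + d + 1))⁻¹) ^ (n + 1)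

lemma analyticAt_mirrorF (n : ℕ) (α : ℂ) {h0 : ℝ} (hh : 0 < h0) :
    AnalyticAt ℝ (fun x : ℝ => mirrorF n α x) h0 := by
  set U : Set ℂ := Metric.ball ((h0 : ℂ)) (h0 / 2) with hUdef
  -- basic estimates on U
  have hball : ∀ z ∈ U, h0 / 2 < z.re ∧ h0 / 2 < ‖z‖ ∧ ‖z‖ ≤ 2 * h0 := by
    intro z hz
    rw [hUdef, Metric.mem_ball, Complex.dist_eq] at hz
    have h1 : |(z - (h0 : ℂ)).re| ≤ ‖z - (h0 : ℂ)‖ := Complex.abs_re_le_norm _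
    have h2 : (z - (h0 : ℂ)).re = z.re - h0 := by simp
    have hre : h0 / 2 < z.re := by
      rw [h2] at h1
      have := neg_le_of_abs_le h1
      linarith
    refine ⟨hre, lt_of_lt_of_le hre (Complex.re_le_norm z), ?_⟩
    calc ‖z‖ = ‖(z - (h0 : ℂ)) + (h0 : ℂ)‖ := by ring_nf
      _ ≤ ‖z - (h0 : ℂ)‖ + ‖(h0 : ℂ)‖ := norm_add_le _ _
      _ ≤ h0 / 2 + h0 := by
          rw [Complex.norm_real, Real.norm_of_nonneg hh.le]
          linarith
      _ ≤ 2 * h0 := by linarith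
  -- the terms are differentiable on U
  have hdiff : ∀ d : ℕ, DifferentiableOn ℂ
      (fun z => Complex.exp (-((n : ℂ) + 1) * (α + d) * Complex.log z) *
        ((Complex.Gamma (α + d + 1))⁻¹) ^ (n + 1)) U := by
    intro d z hz
    have hslit : z ∈ Complex.slitPlane := Or.inl (lt_trans (by positivity) (hball z hz).1)
    exact ((((Complex.differentiableAt_log hslit).const_mul
      (-((n : ℂ) + 1) * (α + d))).cexp).mul_const _).differentiableWithinAt
  -- uniform bound
  set Λ : ℝ := max |Real.log (h0 / 2)| |Real.log (2 * h0)| with hΛdef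
  set E : ℝ := Real.exp (((n : ℝ) + 1) * (‖α‖ * Λ + ‖α‖ * Real.pi))
    with hEdef
  set r : ℝ := Real.exp (-((n : ℝ) + 1) * Real.log (h0 / 2)) with hrdef
  have hbound : ∀ (d : ℕ) (z : ℂ), z ∈ U →
      ‖Complex.exp (-((n : ℂ) + 1) * (α + d) * Complex.log z) *
        ((Complex.Gamma (α + d + 1))⁻¹) ^ (n + 1)‖
      ≤ E * (r ^ d * ‖(Complex.Gamma (α + d + 1))⁻¹‖ ^ (n + 1)) := by
    intro d z hz
    obtain ⟨hre, habs1, habs2⟩ := hball z hz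
    have habspos : 0 < ‖z‖ := lt_trans (by positivity) habs1
    set L := Complex.log z with hLdef
    have hre' : (-((n : ℂ) + 1) * (α + d) * L).re
        = (d : ℝ) * (-((n : ℝ) + 1) * L.re)
          + (-((n : ℝ) + 1)) * (α.re * L.re - α.im * L.im) := by
      have : (-((n : ℂ) + 1) * (α + (d : ℂ)) * L)
          = ((( -((n : ℝ) + 1) : ℝ)) : ℂ) * ((α + (d : ℂ)) * L) := by push_cast; ring
      rw [this]
      simp [Complex.mul_re, Complex.add_re, Complex.add_im]
      ring
    rw [norm_mul, Complex.norm_exp, hre', Real.exp_add,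
      Real.exp_nat_mul]
    have hLre : L.re = Real.log ‖z‖ := Complex.log_re z
    have hLre1 : Real.log (h0 / 2) ≤ L.re := by
      rw [hLre]; exact Real.log_le_log (by positivity) habs1.le
    have hLre2 : L.re ≤ Real.log (2 * h0) := by
      rw [hLre]; exact Real.log_le_log habspos habs2
    have hΛ : |L.re| ≤ Λ := abs_le_max_abs_abs hLre1 hLre2
    have hLim : |L.im| ≤ Real.pi := by
      rw [hLdef, Complex.log_im]
      exact Complex.abs_arg_le_pi z
    have b1 : Real.exp (-((n : ℝ) + 1) * L.re) ^ d ≤ r ^ d := by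
      apply pow_le_pow_left₀ (Real.exp_nonneg _)
      exact Real.exp_le_exp.mpr (by nlinarith)
    have b2 : Real.exp ((-((n : ℝ) + 1)) * (α.re * L.re - α.im * L.im)) ≤ E := by
      apply Real.exp_le_exp.mpr
      have p1 : -(α.re * L.re) ≤ |α.re| * |L.re| := by
        rw [← abs_mul]; exact neg_le_abs _
      have p2 : α.im * L.im ≤ |α.im| * |L.im| := by
        rw [← abs_mul]; exact le_abs_self _
      have q1 : |α.re| ≤ ‖α‖ := Complex.abs_re_le_norm α
      have q2 : |α.im| ≤ ‖α‖ := Complex.abs_im_le_norm α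
      have hΛ0 : (0 : ℝ) ≤ Λ := le_trans (abs_nonneg _) hΛ
      have hπ : (0 : ℝ) ≤ Real.pi := Real.pi_pos.le
      nlinarith [abs_nonneg L.re, abs_nonneg L.im, abs_nonneg α.re, abs_nonneg α.im,
        mul_le_mul q1 hΛ (abs_nonneg _) (le_trans (abs_nonneg _) q1),
        mul_le_mul q2 hLim (abs_nonneg _) (le_trans (abs_nonneg _) q2),
        mul_le_mul_of_nonneg_left hΛ (abs_nonneg α.re),
        mul_le_mul_of_nonneg_left hLim (abs_nonneg α.im)]
    calc Real.exp (-((n : ℝ) + 1) * L.re) ^ d *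
          Real.exp ((-((n : ℝ) + 1)) * (α.re * L.re - α.im * L.im)) *
          ‖((Complex.Gamma (α + d + 1))⁻¹) ^ (n + 1)‖
        ≤ r ^ d * E * ‖((Complex.Gamma (α + d + 1))⁻¹) ^ (n + 1)‖ := by
          apply mul_le_mul_of_nonneg_right _ (norm_nonneg _)
          exact mul_le_mul b1 b2 (Real.exp_nonneg _) (by positivity)
      _ = E * (r ^ d * ‖(Complex.Gamma (α + d + 1))⁻¹‖ ^ (n + 1)) := by
          rw [norm_pow]; ring
  have hu : Summable (fun d : ℕ =>
      E * (r ^ d * ‖(Complex.Gamma (α + d + 1))⁻¹‖ ^ (n + 1))) := by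
    apply Summable.mul_left
    have := master n α 0 (r := r) (Real.exp_pos _)
    simpa using this
  have hDO : DifferentiableOn ℂ (mFC n α) U := by
    unfold mFC
    exact differentiableOn_tsum_of_summable_norm hu hdiff Metric.isOpen_ball hbound
  have hAC : AnalyticAt ℂ (mFC n α) ((h0 : ℂ)) :=
    (hDO.analyticOnNhd Metric.isOpen_ball) _ (Metric.mem_ball_self (by positivity))
  have hcomp : AnalyticAt ℝ (fun x : ℝ => mFC n α ((x : ℝ) : ℂ)) h0 := by
    have h1 : AnalyticAt ℝ (mFC n α) ((h0 : ℂ)) := hAC.restrictScalars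
    have h2 : AnalyticAt ℝ (fun x : ℝ => ((x : ℝ) : ℂ)) h0 :=
      Complex.ofRealCLM.analyticAt h0
    exact h1.comp h2
  apply hcomp.congr
  filter_upwards [isOpen_Ioi.mem_nhds (Set.mem_Ioi.mpr hh)] with x hx
  rw [Set.mem_Ioi] at hx
  rw [mirrorF_eq_mG n α hx]
  unfold mFC mG mterm
  apply tsum_congr
  intro d
  rw [pow_zero, one_mul, Complex.ofReal_log hx.le]


end MirrorODE

theorem mirrorF_hypergeometric_ODE (n : ℕ) (hn : 1 ≤ n) (α : ℂ) :
    (∀ h : ℝ, 0 < h →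
      Summable (fun d : ℕ =>
        ‖((h : ℂ) ^ ((n + 1) * d))⁻¹ * ((Complex.Gamma (α + d + 1))⁻¹) ^ (n + 1)‖)) ∧
    ContDiffOn ℝ (⊤ : ℕ∞) (fun h : ℝ => mirrorF n α h) (Set.Ioi (0 : ℝ)) ∧
    (∀ h : ℝ, 0 < h →
      (mirrorD n)^[n + 1] (fun h' : ℝ => mirrorF n α h') h =
        ((h : ℂ) ^ (n + 1))⁻¹ * mirrorF n α h +
          α ^ (n + 1) * Complex.exp (-((n : ℂ) + 1) * α * (Real.log h : ℂ)) *
            ((Complex.Gamma (α + 1))⁻¹) ^ (n + 1)) := by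
  refine ⟨?_, ?_, ?_⟩
  · intro h hh
    have key : ∀ d : ℕ,
        ‖((h : ℂ) ^ ((n + 1) * d))⁻¹ * ((Complex.Gamma (α + d + 1))⁻¹) ^ (n + 1)‖
        = Real.exp (-((n : ℝ) + 1) * Real.log h) ^ d *
          ‖(Complex.Gamma (α + d + 1))⁻¹‖ ^ (n + 1) := by
      intro d
      rw [norm_mul, norm_pow, MirrorODE.hpow_exp ((n + 1) * d) hh,
        Complex.norm_exp]
      congr 2
      have : (-(((n + 1) * d : ℕ) : ℂ) * (Real.log h : ℂ)).re
          = (d : ℝ) * (-((n : ℝ) + 1) * Real.log h) := by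
        simp [Complex.mul_re]
        push_cast
        ring
      rw [this, Real.exp_nat_mul]
    exact (MirrorODE.master n α 0 (Real.exp_pos _)).congr fun d => by rw [key d]; ring
  · have hA : AnalyticOnNhd ℝ (fun h : ℝ => mirrorF n α h) (Set.Ioi (0 : ℝ)) :=
      fun x hx => MirrorODE.analyticAt_mirrorF n α hx
    exact hA.contDiffOn (uniqueDiffOn_Ioi 0)
  · intro h hh
    exact (MirrorODE.iterate_eq n α (n + 1) hh).trans (MirrorODE.mG_top n α hh)
end

section
/- Fix an integer n ≥ 1 and a real number a > 0. The n+1 functions ξ_0, ξ_1, …, ξ_n, viewed as functions on the interval (a,∞), are linearly independent over ℂ: if c_0,…,c_n ∈ ℂ satisfy Σ_{k=0}^n c_k·ξ_k(h) = 0 for all h > a, then c_k = 0 for every k. -/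
open Complex

/-- `ξ_k(h)`, the `k`-th Taylor coefficient at `α = 0` of `α ↦ F_n(α,h)`. -/
noncomputable def mirrorXi (n k : ℕ) (h : ℝ) : ℂ :=
  (1 / (k.factorial : ℂ)) * iteratedDeriv k (fun α : ℂ => mirrorF n α h) 0

open Filter Topology Metric

/-!
Substituting `α = β / log h` turns the prefactor `h^{-(n+1)α}` into `e^{-(n+1)β}`, while the
series tends to `Γ(1)^{-(n+1)} = 1` as `h → ∞`, uniformly for bounded `β`: its `d`-th term is
`O(h^{-(n+1)d})`. By Weierstrass' theorem the Taylor coefficients at `β = 0` converge too, so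
`ξ_k(h) ~ (-(n+1))^k (log h)^k / k!`. Functions growing like distinct powers of `log h` are
linearly independent: in a vanishing combination, the coefficient of the highest power must vanish.
-/

theorem eq_zero_of_eventually_sum_mul_eq_zero {X 𝕜 : Type*} [NormedField 𝕜] {l : Filter X}
    [l.NeBot] {u : X → 𝕜} (hu : Tendsto u l (𝓝 0)) {f : ℕ → X → 𝕜} {A : ℕ → 𝕜}
    (hA : ∀ k, A k ≠ 0) (hf : ∀ k, Tendsto (fun x => f k x * u x ^ k) l (𝓝 (A k)))
    (N : ℕ) (c : Fin N → 𝕜) (hc : ∀ᶠ x in l, ∑ k, c k * f k x = 0) : ∀ k, c k = 0 := by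
  induction N with
  | zero => exact fun k => k.elim0
  | succ N ih =>
    have hlower : ∀ k : Fin N, Tendsto (fun x => c k.castSucc * f k x * u x ^ N) l (𝓝 0) := by
      intro k
      have hpow : Tendsto (fun x => u x ^ (N - k)) l (𝓝 0) := by
        simpa [zero_pow (Nat.sub_ne_zero_of_lt k.isLt)] using hu.pow (N - k)
      have := ((hf k).mul hpow).const_mul (c k.castSucc)
      rw [mul_zero, mul_zero] at this
      refine this.congr fun x => ?_
      rw [mul_assoc (f k x), ← pow_add, Nat.add_sub_cancel' k.isLt.le, mul_assoc]
    have hsum : Tendsto (fun x => (∑ k, c k * f k x) * u x ^ N) l (𝓝 (c (Fin.last N) * A N)) := by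
      have := (tendsto_finsetSum Finset.univ fun k _ => hlower k).add
        ((hf N).const_mul (c (Fin.last N)))
      rw [Finset.sum_const_zero, zero_add] at this
      refine this.congr fun x => ?_
      simp only [Fin.sum_univ_castSucc, Fin.val_castSucc, Fin.val_last, add_mul, Finset.sum_mul,
        mul_assoc]
    have hzero : Tendsto (fun x => (∑ k, c k * f k x) * u x ^ N) l (𝓝 0) :=
      tendsto_const_nhds.congr' (hc.mono fun x hx => by simp [hx])
    have hlast : c (Fin.last N) = 0 :=
      (mul_eq_zero.mp (tendsto_nhds_unique hsum hzero)).resolve_right (hA N)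
    have hinit : ∀ k : Fin N, c k.castSucc = 0 := by
      refine ih _ (hc.mono fun x hx => ?_)
      simpa [Fin.sum_univ_castSucc, hlast] using hx
    exact fun k => Fin.lastCases hlast hinit k

theorem tendstoUniformlyOn_of_tendsto_sub {ι α E : Type*} [SeminormedAddCommGroup E]
    {F : ι → α → E} {f : α → E} {p : Filter ι} {s : Set α}
    (h : Tendsto (fun q : ι × α => F q.1 q.2 - f q.2) (p ×ˢ 𝓟 s) (𝓝 0)) :
    TendstoUniformlyOn F f p s := by
  rw [tendstoUniformlyOn_iff_tendsto, uniformity_eq_comap_nhds_zero E]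
  exact tendsto_comap_iff.2 h

theorem TendstoLocallyUniformlyOn.iteratedDeriv {ι E : Type*} [NormedAddCommGroup E]
    [NormedSpace ℂ E] [CompleteSpace E] {F : ι → ℂ → E} {f : ℂ → E} {φ : Filter ι} {U : Set ℂ}
    (hf : TendstoLocallyUniformlyOn F f φ U) (hF : ∀ᶠ i in φ, Differentiable ℂ (F i))
    (hU : IsOpen U) (k : ℕ) :
    TendstoLocallyUniformlyOn (fun i => _root_.iteratedDeriv k (F i)) (_root_.iteratedDeriv k f)
      φ U := by
  induction k with
  | zero => simpa only [iteratedDeriv_zero] using hf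
  | succ k ih =>
    simp only [iteratedDeriv_succ]
    exact ih.deriv (hF.mono fun i hi =>
      (hi.contDiff.differentiable_iteratedDeriv k (WithTop.coe_lt_top _)).differentiableOn) hU

theorem norm_inv_Gamma_add_one_le {z : ℂ} (hz : 1 ≤ ‖z‖) :
    ‖(Gamma (z + 1))⁻¹‖ ≤ ‖(Gamma z)⁻¹‖ := by
  rw [Gamma_add_one z (norm_pos_iff.mp (by linarith)), mul_inv, norm_mul, norm_inv]
  exact mul_le_of_le_one_left (norm_nonneg _) (inv_le_one_of_one_le₀ hz)

theorem exists_bound_norm_inv_Gamma_add_nat (R : ℝ) :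
    ∃ M, ∀ z : ℂ, ‖z‖ ≤ R → ∀ d : ℕ, ‖(Gamma (z + d))⁻¹‖ ≤ M := by
  obtain ⟨M, hM⟩ := (isCompact_closedBall (0 : ℂ) (R + 2)).exists_bound_of_continuousOn
    differentiable_one_div_Gamma.continuous.continuousOn
  refine ⟨M, fun z hz d => ?_⟩
  have hR : 0 ≤ R := (norm_nonneg z).trans hz
  induction d with
  | zero => exact hM _ (by simpa using hz.trans (by linarith))
  | succ d ih =>
    rw [Nat.cast_succ, ← add_assoc]
    by_cases hzd : 1 ≤ ‖z + d‖
    · exact (norm_inv_Gamma_add_one_le hzd).trans ih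
    · refine hM _ (mem_closedBall_zero_iff.mpr ?_)
      linarith [norm_add_le (z + d) 1, norm_one (α := ℂ)]

theorem norm_tsum_sub_apply_zero_le {E : Type*} [NormedAddCommGroup E] [CompleteSpace E] {f : ℕ → E}
    {C q : ℝ} (hq₀ : 0 ≤ q) (hq₁ : q < 1) (hf : ∀ d, ‖f d‖ ≤ C * q ^ d) :
    ‖∑' d, f d - f 0‖ ≤ C * q / (1 - q) := by
  have hgeom : HasSum (fun d => C * q ^ (d + 1)) (C * q / (1 - q)) := by
    simpa [pow_succ, mul_assoc, mul_comm q, div_eq_mul_inv] using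
      (hasSum_geometric_of_lt_one hq₀ hq₁).mul_left (C * q)
  have hsum : Summable f :=
    .of_norm_bounded ((summable_geometric_of_lt_one hq₀ hq₁).mul_left C) hf
  rw [hsum.tsum_eq_zero_add, add_sub_cancel_left]
  exact tsum_of_norm_bounded hgeom fun d => hf (d + 1)

theorem tendsto_ofReal_log_inv_atTop :
    Tendsto (fun h : ℝ => ((Real.log h : ℂ))⁻¹) atTop (𝓝 0) := by
  simpa [Function.comp_def] using
    (continuous_ofReal.tendsto 0).comp Real.tendsto_log_atTop.inv_tendsto_atTop

noncomputable def mirrorTerm (n : ℕ) (h : ℝ) (α : ℂ) (d : ℕ) : ℂ :=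
  ((h : ℂ) ^ ((n + 1) * d))⁻¹ * ((Gamma (α + d + 1))⁻¹) ^ (n + 1)

theorem mirrorF_eq_exp_mul_tsum (n : ℕ) (α : ℂ) (h : ℝ) :
    mirrorF n α h = exp (-((n : ℂ) + 1) * α * (Real.log h : ℂ)) * ∑' d, mirrorTerm n h α d :=
  rfl

theorem mirrorTerm_zero (n : ℕ) (h : ℝ) (α : ℂ) :
    mirrorTerm n h α 0 = ((Gamma (α + 1))⁻¹) ^ (n + 1) := by
  simp [mirrorTerm]

theorem norm_mirrorTerm_le {n : ℕ} {h : ℝ} (hh : 0 < h) {α : ℂ} {d : ℕ} {M : ℝ}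
    (hM : ‖(Gamma (α + 1 + d))⁻¹‖ ≤ M) :
    ‖mirrorTerm n h α d‖ ≤ M ^ (n + 1) * ((h ^ (n + 1))⁻¹) ^ d := by
  rw [add_right_comm] at hM
  rw [mirrorTerm, norm_mul, norm_inv, norm_pow, norm_pow, norm_real, Real.norm_of_nonneg hh.le,
    pow_mul, inv_pow, mul_comm]
  gcongr

theorem differentiable_mirrorF (n : ℕ) {h : ℝ} (hh : 1 < h) :
    Differentiable ℂ fun α => mirrorF n α h := by
  have hq₁ : (h ^ (n + 1))⁻¹ < 1 := inv_lt_one_of_one_lt₀ (one_lt_pow₀ hh n.succ_ne_zero)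
  have hseries : Differentiable ℂ fun α => ∑' d, mirrorTerm n h α d := by
    intro α₀
    obtain ⟨M, hM⟩ := exists_bound_norm_inv_Gamma_add_nat (‖α₀‖ + 2)
    have hU : DifferentiableOn ℂ (fun α => ∑' d, mirrorTerm n h α d) (ball 0 (‖α₀‖ + 1)) := by
      refine differentiableOn_tsum_of_summable_norm
        ((summable_geometric_of_lt_one (by positivity) hq₁).mul_left (M ^ (n + 1)))
        (fun d => ?_) isOpen_ball fun d α hα => norm_mirrorTerm_le (by linarith) (hM _ ?_ d)
      · exact ((differentiable_one_div_Gamma.comp (by fun_prop)).pow _).const_mul _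
          |>.differentiableOn
      · linarith [norm_add_le α 1, norm_one (α := ℂ), mem_ball_zero_iff.mp hα]
    exact hU.differentiableAt (isOpen_ball.mem_nhds (by simp))
  have hexp : Differentiable ℂ fun α => exp (-((n : ℂ) + 1) * α * (Real.log h : ℂ)) := by
    fun_prop
  exact hexp.mul hseries

theorem tendsto_tsum_mirrorTerm (n : ℕ) {X : Type*} {l : Filter X} {h : X → ℝ} {α : X → ℂ}
    (hh : Tendsto h l atTop) (hα : Tendsto α l (𝓝 0)) :
    Tendsto (fun x => ∑' d, mirrorTerm n (h x) (α x) d) l (𝓝 1) := by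
  obtain ⟨M, hM⟩ := exists_bound_norm_inv_Gamma_add_nat 2
  set q : X → ℝ := fun x => (h x ^ (n + 1))⁻¹
  have hq : Tendsto q l (𝓝 0) :=
    tendsto_inv_atTop_zero.comp ((tendsto_pow_atTop n.succ_ne_zero).comp hh)
  have hhead : Tendsto (fun x => mirrorTerm n (h x) (α x) 0) l (𝓝 1) := by
    have hcont : Continuous fun α : ℂ => ((Gamma (α + 1))⁻¹) ^ (n + 1) :=
      (differentiable_one_div_Gamma.continuous.comp (continuous_add_const 1)).pow _
    simpa [mirrorTerm_zero, Function.comp_def] using (hcont.tendsto 0).comp hα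
  have htail : Tendsto (fun x => ∑' d, mirrorTerm n (h x) (α x) d - mirrorTerm n (h x) (α x) 0)
      l (𝓝 0) := by
    have hbound : Tendsto (fun x => M ^ (n + 1) * q x / (1 - q x)) l
        (𝓝 (M ^ (n + 1) * 0 / (1 - 0))) :=
      (hq.const_mul _).div (tendsto_const_nhds.sub hq) (by norm_num)
    rw [mul_zero, zero_div] at hbound
    refine squeeze_zero_norm' ?_ hbound
    filter_upwards [hh.eventually_gt_atTop 1, hα.eventually (closedBall_mem_nhds 0 one_pos)]
      with x hx₁ hx₂
    refine norm_tsum_sub_apply_zero_le (by positivity)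
      (inv_lt_one_of_one_lt₀ (one_lt_pow₀ hx₁ n.succ_ne_zero))
      fun d => norm_mirrorTerm_le (by linarith) (hM _ ?_ d)
    linarith [norm_add_le (α x) 1, norm_one (α := ℂ), mem_closedBall_zero_iff.mp hx₂]
  simpa using htail.add hhead

theorem tendstoLocallyUniformlyOn_mirrorF_log_rescaled (n : ℕ) :
    TendstoLocallyUniformlyOn (fun (h : ℝ) (β : ℂ) => mirrorF n ((Real.log h : ℂ)⁻¹ * β) h)
      (fun β => exp (-((n : ℂ) + 1) * β)) atTop (ball 0 1) := by
  refine (tendstoUniformlyOn_of_tendsto_sub ?_).tendstoLocallyUniformlyOn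
  set l := (atTop : Filter ℝ) ×ˢ 𝓟 (ball (0 : ℂ) 1)
  have hball : ∀ᶠ q in l, ‖q.2‖ ≤ 1 :=
    tendsto_snd.eventually (eventually_principal.mpr fun β hβ => (mem_ball_zero_iff.mp hβ).le)
  have hα : Tendsto (fun q : ℝ × ℂ => (Real.log q.1 : ℂ)⁻¹ * q.2) l (𝓝 0) :=
    (tendsto_ofReal_log_inv_atTop.comp tendsto_fst).zero_mul_isBoundedUnder_le
      (isBoundedUnder_of_eventually_le hball)
  have hexp : ∀ᶠ q in l, ‖exp (-((n : ℂ) + 1) * q.2)‖ ≤ Real.exp (n + 1) := by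
    filter_upwards [hball] with q hq
    refine (norm_exp_le_exp_norm _).trans (Real.exp_le_exp.mpr ?_)
    have hn : ‖(n : ℂ) + 1‖ = n + 1 := by exact_mod_cast norm_natCast (n + 1)
    rw [norm_mul, norm_neg, hn]
    nlinarith [norm_nonneg q.2]
  have hG := (tendsto_tsum_mirrorTerm n tendsto_fst hα).sub_const 1
  rw [sub_self] at hG
  have := isBoundedUnder_le_mul_tendsto_zero (isBoundedUnder_of_eventually_le hexp) hG
  refine this.congr' ?_
  filter_upwards [tendsto_fst.eventually (eventually_gt_atTop 1)] with q hq
  have hlog : (Real.log q.1 : ℂ) ≠ 0 := ofReal_ne_zero.mpr (Real.log_pos hq).ne'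
  simp only [mirrorF_eq_exp_mul_tsum]
  field_simp

theorem tendsto_mirrorXi_mul_inv_log_pow (n k : ℕ) :
    Tendsto (fun h : ℝ => mirrorXi n k h * ((Real.log h : ℂ))⁻¹ ^ k) atTop
      (𝓝 ((-((n : ℂ) + 1)) ^ k / k.factorial)) := by
  have hdiff : ∀ᶠ h : ℝ in atTop,
      Differentiable ℂ fun β : ℂ => mirrorF n ((Real.log h : ℂ)⁻¹ * β) h :=
    (eventually_gt_atTop 1).mono fun h hh =>
      (differentiable_mirrorF n hh).comp (differentiable_id.const_mul _)
  have hlim := ((tendstoLocallyUniformlyOn_mirrorF_log_rescaled n).iteratedDeriv hdiff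
    isOpen_ball k).tendsto_at (mem_ball_self one_pos)
  simp only [iteratedDeriv_cexp_const_mul, mul_zero, exp_zero, mul_one] at hlim
  refine (hlim.div_const _).congr' ((eventually_gt_atTop 1).mono fun h hh => ?_)
  rw [iteratedDeriv_comp_const_mul (differentiable_mirrorF n hh).contDiff]
  beta_reduce
  rw [mul_zero, mirrorXi]
  ring

theorem mirrorXi_linearIndependent_general (n : ℕ) (a : ℝ)
    (c : Fin (n + 1) → ℂ)
    (hc : ∀ h : ℝ, a < h → ∑ k : Fin (n + 1), c k * mirrorXi n k h = 0) :
    ∀ k : Fin (n + 1), c k = 0 :=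
  eq_zero_of_eventually_sum_mul_eq_zero tendsto_ofReal_log_inv_atTop
    (fun k => div_ne_zero (pow_ne_zero k (neg_ne_zero.mpr (Nat.cast_add_one_ne_zero n)))
      (Nat.cast_ne_zero.mpr k.factorial_ne_zero))
    (tendsto_mirrorXi_mul_inv_log_pow n) (n + 1) c ((eventually_gt_atTop a).mono hc)

theorem mirrorXi_linearIndependent (n : ℕ) (hn : 1 ≤ n) (a : ℝ) (ha : 0 < a)
    (c : Fin (n + 1) → ℂ)
    (hc : ∀ h : ℝ, a < h → ∑ k : Fin (n + 1), c k * mirrorXi n k h = 0) :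
    ∀ k : Fin (n + 1), c k = 0 :=
  mirrorXi_linearIndependent_general n a c hc
end

section
/- Fix an integer n ≥ 1. In the Laurent polynomial ring R = ℂ[x_1^{±1},…,x_n^{±1}], the n elements x_1 − (x_1⋯x_n)^{−1}, x_2 − (x_1⋯x_n)^{−1}, …, x_n − (x_1⋯x_n)^{−1} form a regular sequence, and the quotient R/I is nonzero. -/
open Complex

/-- The ring of Laurent polynomials `ℂ[x_1^{±1},…,x_n^{±1}]`. -/
abbrev LaurentR (n : ℕ) : Type := AddMonoidAlgebra ℂ (Fin n → ℤ)

/-- The variable `x_i`. -/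
noncomputable def LX (n : ℕ) (i : Fin n) : LaurentR n :=
  AddMonoidAlgebra.single (Pi.single i (1 : ℤ)) 1

/-- The monomial `(x_1⋯x_n)⁻¹`. -/
noncomputable def LXinv (n : ℕ) : LaurentR n :=
  AddMonoidAlgebra.single (fun _ => (-1 : ℤ)) 1

/-- The mirror superpotential `f = x_1 + ⋯ + x_n + (x_1⋯x_n)⁻¹`. -/
noncomputable def Lf (n : ℕ) : LaurentR n := (∑ i, LX n i) + LXinv n

/-- The Jacobian ideal `I = (x_1·∂f/∂x_1, …, x_n·∂f/∂x_n)
  = (x_1 − (x_1⋯x_n)⁻¹, …, x_n − (x_1⋯x_n)⁻¹)`. -/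
noncomputable def LI (n : ℕ) : Ideal (LaurentR n) :=
  Ideal.span (Set.range fun i : Fin n => LX n i - LXinv n)

/-- The ideal generated by the first `k` elements of the sequence. -/
noncomputable def LJ (n : ℕ) (k : ℕ) : Ideal (LaurentR n) :=
  Ideal.span ((fun i : Fin n => LX n i - LXinv n) '' {i : Fin n | (i : ℕ) < k})

/-!
Modulo the first `k` generators, `x_j ≡ (x_1⋯x_n)⁻¹` for `j < k`, i.e. `x^{e_j + 𝟙} ≡ 1`. A
projection `p` of `ℤⁿ` along the lattice spanned by these `e_j + 𝟙` induces a ring endomorphism of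
`R` whose kernel is exactly this ideal, so the quotient embeds into the domain `R`, where the image
of `x_k - (x_1⋯x_n)⁻¹` is nonzero. The augmentation `x^a ↦ 1` shows `R ⧸ I ≠ 0`.
-/

namespace AddMonoidAlgebra

theorem single_sub_one_eq_zero_iff {R G : Type*} [Ring R] [Nontrivial R] [Zero G] {g : G} :
    single g (1 : R) - 1 = 0 ↔ g = 0 := by
  rw [sub_eq_zero, one_def, single_left_inj one_ne_zero]

variable {R G : Type*} [CommRing R] [AddCommGroup G]

theorem mk_single_eq_one_of_mem_closure {J : Ideal R[G]} {S : Set G}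
    (hS : ∀ s ∈ S, single s (1 : R) - 1 ∈ J) {g : G} (hg : g ∈ AddSubgroup.closure S) :
    Ideal.Quotient.mk J (single g 1) = 1 := by
  induction hg using AddSubgroup.closure_induction with
  | mem s hs => rw [← map_one (Ideal.Quotient.mk J)]; exact Ideal.Quotient.eq.mpr (hS s hs)
  | zero => rw [← one_def, map_one]
  | add a b _ _ ha hb => rw [← one_mul (1 : R), ← single_mul_single, map_mul, ha, hb, one_mul]
  | neg a _ ha =>
    calc Ideal.Quotient.mk J (single (-a) 1)
        = Ideal.Quotient.mk J (single (-a) 1 * single a 1) := by rw [map_mul, ha, mul_one]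
      _ = 1 := by rw [single_mul_single, neg_add_cancel, one_mul, ← one_def, map_one]

theorem ker_mapDomainRingHom_eq (p : G →+ G) {J : Ideal R[G]} {S : Set G}
    (hS : ∀ s ∈ S, single s (1 : R) - 1 ∈ J) (hp : ∀ g, g - p g ∈ AddSubgroup.closure S)
    (hJ : J ≤ RingHom.ker (mapDomainRingHom R p)) :
    RingHom.ker (mapDomainRingHom R p) = J := by
  -- `g ≡ p g` modulo the closure of `S`, so the quotient map by `J` factors through `mapDomain p`
  have hcomp : (Ideal.Quotient.mk J).comp (mapDomainRingHom R p) = Ideal.Quotient.mk J := by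
    refine ringHom_ext (fun r => by simp) (fun g => ?_)
    have hsplit : single g (1 : R) = single (g - p g) 1 * single (p g) 1 := by
      rw [single_mul_single, sub_add_cancel, one_mul]
    rw [RingHom.comp_apply, mapDomainRingHom_apply, mapDomain_single, hsplit, map_mul,
      mk_single_eq_one_of_mem_closure hS (hp g), one_mul]
  refine le_antisymm (fun r hr => ?_) hJ
  rw [← Ideal.Quotient.eq_zero_iff_mem, ← hcomp, RingHom.comp_apply, hr, map_zero]

end AddMonoidAlgebra

open AddMonoidAlgebra

namespace LaurentR

/-- The exponent of `x_j · x_1⋯x_n`, so that `x_j - (x_1⋯x_n)⁻¹ = (x_1⋯x_n)⁻¹ (x^{relExp j} - 1)`. -/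
abbrev relExp (n : ℕ) (j : Fin n) : Fin n → ℤ := Pi.single j 1 + 1

/-- A projection of `ℤⁿ` along the span of the `relExp j`, `j < k`: the coefficient `a j - a k`
of `relExp j` takes the value `δ_ij` on `relExp i` for `i < k` because `k` is not among them. -/
def retraction (n : ℕ) (k : Fin n) : (Fin n → ℤ) →+ (Fin n → ℤ) :=
  AddMonoidHom.mk' (fun a => a - ∑ j with j < k, (a j - a k) • relExp n j) fun a b => by
    simp only [Pi.add_apply, add_sub_add_comm, add_smul, Finset.sum_add_distrib]

theorem retraction_apply (n : ℕ) (k : Fin n) (a : Fin n → ℤ) :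
    retraction n k a = a - ∑ j with j < k, (a j - a k) • relExp n j := rfl

theorem sub_retraction_mem_closure (n : ℕ) (k : Fin n) (a : Fin n → ℤ) :
    a - retraction n k a ∈ AddSubgroup.closure (relExp n '' {j | (j : ℕ) < k}) := by
  rw [retraction_apply, sub_sub_cancel]
  refine AddSubgroup.sum_mem _ fun j hj => AddSubgroup.zsmul_mem _ (AddSubgroup.subset_closure ?_) _
  exact ⟨j, (Finset.mem_filter.mp hj).2, rfl⟩

theorem retraction_relExp_of_lt (n : ℕ) {k j : Fin n} (hj : j < k) :
    retraction n k (relExp n j) = 0 := by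
  rw [retraction_apply, sub_eq_zero, Finset.sum_eq_single_of_mem j (by simpa using hj)]
  · simp [hj.ne']
  · intro i _ hij
    simp [hij, hj.ne']

theorem retraction_relExp_self_ne_zero (n : ℕ) (k : Fin n) :
    retraction n k (relExp n k) ≠ 0 := by
  intro h
  -- coordinate `k` of the left side is `2 + #{j | j < k}`
  have := congrFun h k
  simp only [retraction_apply, Pi.sub_apply, Finset.sum_apply, Pi.smul_apply] at this
  rw [Finset.sum_congr rfl fun j hj => show _ = (-1 : ℤ) by
    simp [(Finset.mem_filter.mp hj).2.ne]] at this
  simp at this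
  omega

theorem isUnit_LXinv (n : ℕ) : IsUnit (LXinv n) :=
  IsUnit.of_mul_eq_one (single 1 1) <| by
    rw [LXinv, single_mul_single, one_mul, one_def]
    congr

theorem LX_sub_LXinv (n : ℕ) (j : Fin n) :
    LX n j - LXinv n = LXinv n * (single (relExp n j) 1 - 1) := by
  rw [mul_sub, mul_one, LXinv, single_mul_single, one_mul, LX]
  congr 2
  ext
  simp

theorem mapDomainRingHom_LX_sub_LXinv_eq_zero_iff {n : ℕ} (p : (Fin n → ℤ) →+ (Fin n → ℤ))
    (j : Fin n) : mapDomainRingHom ℂ p (LX n j - LXinv n) = 0 ↔ p (relExp n j) = 0 := by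
  rw [LX_sub_LXinv, map_mul, ((isUnit_LXinv n).map _).mul_right_eq_zero, map_sub, map_one,
    mapDomainRingHom_apply, mapDomain_single, single_sub_one_eq_zero_iff]

theorem ker_retraction (n : ℕ) (k : Fin n) :
    RingHom.ker (mapDomainRingHom ℂ (retraction n k)) = LJ n k := by
  refine ker_mapDomainRingHom_eq _ ?_ (sub_retraction_mem_closure n k) ?_
  · rintro _ ⟨j, hj, rfl⟩
    rw [← Ideal.unit_mul_mem_iff_mem _ (isUnit_LXinv n), ← LX_sub_LXinv]
    exact Ideal.subset_span ⟨j, hj, rfl⟩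
  · rw [LJ, Ideal.span_le]
    rintro _ ⟨j, hj, rfl⟩
    exact (mapDomainRingHom_LX_sub_LXinv_eq_zero_iff _ j).mpr (retraction_relExp_of_lt n hj)

end LaurentR

open LaurentR

theorem laurent_jacobian_regular_sequence_general (n : ℕ) :
    (∀ k : Fin n, ∀ r : LaurentR n,
      (LX n k - LXinv n) * r ∈ LJ n k → r ∈ LJ n k) ∧
    Nontrivial (LaurentR n ⧸ LI n) := by
  constructor
  · intro k r hr
    rw [← ker_retraction] at hr ⊢
    rw [RingHom.mem_ker, map_mul] at hr
    exact (mul_eq_zero.mp hr).resolve_left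
      ((mapDomainRingHom_LX_sub_LXinv_eq_zero_iff _ k).not.mpr (retraction_relExp_self_ne_zero n k))
  · refine Ideal.Quotient.nontrivial_iff.mpr (ne_top_of_le_ne_top
      (RingHom.ker_ne_top (mapDomainRingHom ℂ (0 : (Fin n → ℤ) →+ (Fin n → ℤ)))) ?_)
    rw [LI, Ideal.span_le]
    rintro _ ⟨j, rfl⟩
    exact (mapDomainRingHom_LX_sub_LXinv_eq_zero_iff 0 j).mpr rfl

/-- The elements `x_i − (x_1⋯x_n)⁻¹`, `i = 1,…,n`, form a regular sequence in the Laurent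
polynomial ring, and the quotient by the ideal they generate is nonzero. -/
theorem laurent_jacobian_regular_sequence (n : ℕ) (hn : 1 ≤ n) :
    (∀ k : Fin n, ∀ r : LaurentR n,
      (LX n k - LXinv n) * r ∈ LJ n k → r ∈ LJ n k) ∧
    Nontrivial (LaurentR n ⧸ LI n) :=
  laurent_jacobian_regular_sequence_general n
end

section
/- Fix an integer n ≥ 1. There is an isomorphism of ℂ-algebras R/I ≅ ℂ[p]/(p^{n+1} − 1) sending the residue class of each variable x_i (i = 1,…,n) to the class of p; under this isomorphism the residue class of f is sent to (n+1)·p. -/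
open Complex

/-!
In `R/I` every variable `x_i` has the same class `q` as `(x_1⋯x_n)⁻¹`, and multiplying
`x_1⋯x_n` by its inverse gives `q^{n+1} = 1`; so `p ↦ q` defines a map
`ℂ[p]/(p^{n+1} − 1) → R/I`. Conversely, evaluating every variable at `p` kills `I`, because
`p^{-n} = p`. Both composites fix the generators, so the two maps are inverse to each other.
-/

open Polynomial AddMonoidAlgebra

namespace AddMonoidAlgebra

variable {k A ι : Type*} [CommSemiring k]

theorem algHom_ext_pi_int [CommSemiring A] [Algebra k A] [Finite ι] [DecidableEq ι]
    {φ ψ : AddMonoidAlgebra k (ι → ℤ) →ₐ[k] A}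
    (h : ∀ i, φ (single (Pi.single i 1) 1) = ψ (single (Pi.single i 1) 1)) : φ = ψ := by
  apply (lift k A (ι → ℤ)).symm.injective
  apply MonoidHom.toAdditiveRight.injective
  exact AddMonoidHom.functions_ext' _ _ _ fun i => AddMonoidHom.ext_int (h i)

variable (k) [Semiring A] [Algebra k A] [Fintype ι]

/-- Evaluation of a Laurent polynomial at the diagonal point `(u, …, u)`. -/
noncomputable def evalDiag (u : Aˣ) : AddMonoidAlgebra k (ι → ℤ) →ₐ[k] A :=
  lift k A (ι → ℤ) <| (Units.coeHom A).comp <|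
    (zpowersHom Aˣ u).comp (∑ i, Pi.evalAddMonoidHom (fun _ => ℤ) i).toMultiplicative

theorem evalDiag_single (u : Aˣ) (v : ι → ℤ) :
    evalDiag k u (single v 1) = ↑(u ^ ∑ i, v i) := by
  simp [evalDiag]

end AddMonoidAlgebra

theorem AdjoinRoot.root_X_pow_sub_one_pow {R : Type*} [CommRing R] (m : ℕ) :
    root (X ^ m - 1 : R[X]) ^ m = 1 := by
  have h := (aeval_eq (f := (X ^ m - 1 : R[X])) (X ^ m - 1)).trans mk_self
  rwa [map_sub, map_pow, aeval_X, map_one, sub_eq_zero] at h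

theorem zpow_neg_natCast_eq_self {G : Type*} [Group G] {u : G} {n : ℕ} (hu : u ^ (n + 1) = 1) :
    u ^ (-(n : ℤ)) = u := by
  rw [zpow_neg, zpow_natCast, inv_eq_of_mul_eq_one_left (by rwa [← pow_succ'])]

section Laurent

variable {n : ℕ} {A : Type*}

theorem evalDiag_LX [Semiring A] [Algebra ℂ A] (u : Aˣ) (i : Fin n) :
    evalDiag ℂ u (LX n i) = u := by
  simp [LX, evalDiag_single]

theorem evalDiag_LXinv [Semiring A] [Algebra ℂ A] {u : Aˣ} (hu : u ^ (n + 1) = 1) :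
    evalDiag ℂ u (LXinv n) = u := by
  simp [LXinv, evalDiag_single, zpow_neg_natCast_eq_self hu]

theorem LI_le_ker_evalDiag [Ring A] [Algebra ℂ A] {u : Aˣ} (hu : u ^ (n + 1) = 1) :
    LI n ≤ RingHom.ker (evalDiag ℂ u) := by
  rw [LI, Ideal.span_le]
  rintro _ ⟨i, rfl⟩
  simp [evalDiag_LX, evalDiag_LXinv hu]

theorem prod_LX_mul_LXinv : (∏ i, LX n i) * LXinv n = 1 := by
  simp only [LX, LXinv]
  rw [AddMonoidAlgebra.prod_single, Finset.univ_sum_single, Finset.prod_const_one,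
    single_mul_single, mul_one, AddMonoidAlgebra.one_def]
  exact congrArg (single · 1) (funext fun _ => add_neg_cancel (1 : ℤ))

theorem mk_LX (i : Fin n) :
    Ideal.Quotient.mk (LI n) (LX n i) = Ideal.Quotient.mk (LI n) (LXinv n) :=
  Ideal.Quotient.eq.mpr (Ideal.subset_span ⟨i, rfl⟩)

theorem mk_LXinv_pow_succ : Ideal.Quotient.mk (LI n) (LXinv n) ^ (n + 1) = 1 := by
  simpa [mk_LX, pow_succ] using congrArg (Ideal.Quotient.mk (LI n)) (prod_LX_mul_LXinv (n := n))

end Laurent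

namespace JacobianQuotient

variable (n : ℕ)

noncomputable def rootUnit : (AdjoinRoot (X ^ (n + 1) - 1 : ℂ[X]))ˣ :=
  Units.ofPowEqOne _ (n + 1) (AdjoinRoot.root_X_pow_sub_one_pow _) n.succ_ne_zero

noncomputable def toAdjoinRoot :
    LaurentR n ⧸ LI n →ₐ[ℂ] AdjoinRoot (X ^ (n + 1) - 1 : ℂ[X]) :=
  Ideal.Quotient.liftₐ (LI n) (evalDiag ℂ (rootUnit n)) fun _ ha =>
    LI_le_ker_evalDiag (Units.pow_ofPowEqOne _ _) ha

noncomputable def ofAdjoinRoot :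
    AdjoinRoot (X ^ (n + 1) - 1 : ℂ[X]) →ₐ[ℂ] LaurentR n ⧸ LI n :=
  AdjoinRoot.liftAlgHom _ (Algebra.ofId ℂ _) (Ideal.Quotient.mk (LI n) (LXinv n)) <| by
    simp [mk_LXinv_pow_succ]

variable {n}

theorem toAdjoinRoot_mk_LX (i : Fin n) :
    toAdjoinRoot n (Ideal.Quotient.mk (LI n) (LX n i)) = AdjoinRoot.root _ :=
  evalDiag_LX _ i

theorem toAdjoinRoot_mk_LXinv :
    toAdjoinRoot n (Ideal.Quotient.mk (LI n) (LXinv n)) = AdjoinRoot.root _ :=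
  evalDiag_LXinv (Units.pow_ofPowEqOne _ _)

theorem ofAdjoinRoot_root :
    ofAdjoinRoot n (AdjoinRoot.root _) = Ideal.Quotient.mk (LI n) (LXinv n) :=
  AdjoinRoot.liftAlgHom_root _ _ _ _

variable (n)

theorem toAdjoinRoot_comp_ofAdjoinRoot : (toAdjoinRoot n).comp (ofAdjoinRoot n) = AlgHom.id ℂ _ :=
  AdjoinRoot.algHom_ext <| by
    rw [AlgHom.comp_apply, ofAdjoinRoot_root, toAdjoinRoot_mk_LXinv, AlgHom.id_apply]

theorem ofAdjoinRoot_comp_toAdjoinRoot : (ofAdjoinRoot n).comp (toAdjoinRoot n) = AlgHom.id ℂ _ :=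
  Ideal.Quotient.algHom_ext _ <| algHom_ext_pi_int fun i => by
    change ofAdjoinRoot n (toAdjoinRoot n (Ideal.Quotient.mk (LI n) (LX n i))) = _
    rw [toAdjoinRoot_mk_LX, ofAdjoinRoot_root, ← mk_LX]
    rfl

noncomputable def equivAdjoinRoot :
    (LaurentR n ⧸ LI n) ≃ₐ[ℂ] AdjoinRoot (X ^ (n + 1) - 1 : ℂ[X]) :=
  AlgEquiv.ofAlgHom _ _ (toAdjoinRoot_comp_ofAdjoinRoot n) (ofAdjoinRoot_comp_toAdjoinRoot n)

end JacobianQuotient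

theorem laurent_jacobian_quotient_iso_general (n : ℕ) :
    ∃ e : (LaurentR n ⧸ LI n) ≃ₐ[ℂ]
        (Polynomial ℂ ⧸ Ideal.span {Polynomial.X ^ (n + 1) - 1}),
      (∀ i : Fin n,
        e (Ideal.Quotient.mk (LI n) (LX n i)) =
          Ideal.Quotient.mk (Ideal.span {Polynomial.X ^ (n + 1) - 1}) Polynomial.X) ∧
      e (Ideal.Quotient.mk (LI n) (Lf n)) =
        ((n : ℂ) + 1) •
          Ideal.Quotient.mk (Ideal.span {Polynomial.X ^ (n + 1) - 1}) Polynomial.X := by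
  refine ⟨JacobianQuotient.equivAdjoinRoot n, JacobianQuotient.toAdjoinRoot_mk_LX, ?_⟩
  change JacobianQuotient.toAdjoinRoot n (Ideal.Quotient.mk (LI n) (Lf n)) = _
  rw [Lf, map_add, map_add, map_sum, map_sum]
  simp only [JacobianQuotient.toAdjoinRoot_mk_LX, JacobianQuotient.toAdjoinRoot_mk_LXinv]
  rw [Finset.sum_const, Finset.card_univ, Fintype.card_fin, add_smul, one_smul,
    Nat.cast_smul_eq_nsmul]
  rfl

/-- `R/I ≅ ℂ[p]/(p^{n+1} − 1)`, sending each `x_i` to `p` and `f` to `(n+1)·p`. -/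
theorem laurent_jacobian_quotient_iso (n : ℕ) (hn : 1 ≤ n) :
    ∃ e : (LaurentR n ⧸ LI n) ≃ₐ[ℂ]
        (Polynomial ℂ ⧸ Ideal.span {Polynomial.X ^ (n + 1) - 1}),
      (∀ i : Fin n,
        e (Ideal.Quotient.mk (LI n) (LX n i)) =
          Ideal.Quotient.mk (Ideal.span {Polynomial.X ^ (n + 1) - 1}) Polynomial.X) ∧
      e (Ideal.Quotient.mk (LI n) (Lf n)) =
        ((n : ℂ) + 1) •
          Ideal.Quotient.mk (Ideal.span {Polynomial.X ^ (n + 1) - 1}) Polynomial.X :=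
  laurent_jacobian_quotient_iso_general n
end

section
/- Fix an integer n ≥ 1. The residue classes of 1, f, f², …, f^n form a basis of R/I as a ℂ-vector space; in particular R/I has dimension n+1 over ℂ. -/
open Complex

/-!
In `R/I` every `x_i` is congruent to `(x_1⋯x_n)⁻¹`, so the quotient map is the substitution
`x_i ↦ u` for a single unit `u`; this forces `u^(n+1) = 1` and `f ≡ (n+1) u`. Conversely the
substitution `x_i ↦ ζ` kills `I` whenever `ζ^(n+1) = 1`. With `ζ = t / (n+1)` in
`ℂ[t]/(t^(n+1) - (n+1)^(n+1))` the two substitutions are mutually inverse, `t` corresponding to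
`f`, and the power basis `1, t, …, t^n` of that algebra is the required basis.
-/

open AddMonoidAlgebra Polynomial

lemma zpow_neg_natCast_eq_self_iff {G : Type*} [Group G] (g : G) (n : ℕ) :
    g ^ (-(n : ℤ)) = g ↔ g ^ (n + 1) = 1 := by
  rw [zpow_neg, zpow_natCast, inv_eq_iff_mul_eq_one, pow_succ]

lemma inv_smul_pow_eq_one {k A : Type*} [Field k] [Semiring A] [Algebra k A] {a : k} (ha : a ≠ 0)
    {x : A} {m : ℕ} (hx : x ^ m = algebraMap k A (a ^ m)) : (a⁻¹ • x) ^ m = 1 := by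
  rw [_root_.smul_pow, hx, Algebra.smul_def, ← map_mul, inv_pow,
    inv_mul_cancel₀ (pow_ne_zero m ha), map_one]

section DiagEval

variable {k A ι : Type*} [CommSemiring k] [CommSemiring A] [Algebra k A] [Fintype ι]

noncomputable def diagEval (ζ : Aˣ) : AddMonoidAlgebra k (ι → ℤ) →ₐ[k] A :=
  lift k A (ι → ℤ)
    { toFun := fun v => ((ζ ^ ∑ i, v.toAdd i : Aˣ) : A)
      map_one' := by simp
      map_mul' := fun v w => by simp [Finset.sum_add_distrib, zpow_add] }

lemma diagEval_single_one (ζ : Aˣ) (v : ι → ℤ) :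
    diagEval (k := k) ζ (single v 1) = ((ζ ^ ∑ i, v i : Aˣ) : A) := by
  simp [diagEval]

lemma eq_diagEval [DecidableEq ι] (φ : AddMonoidAlgebra k (ι → ℤ) →ₐ[k] A) (ζ : Aˣ)
    (h : ∀ i, φ (single (Pi.single i 1) 1) = ζ) : φ = diagEval ζ := by
  refine algHom_ext' ?_ (Subsingleton.elim _ _)
  ext i
  simp [of_apply, h, diagEval_single_one]

lemma AlgHom.comp_diagEval {B : Type*} [CommSemiring B] [Algebra k B] (ψ : A →ₐ[k] B)
    (ζ : Aˣ) :
    ψ.comp (diagEval (ι := ι) ζ) = diagEval (Units.map ψ ζ) := by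
  classical
  exact eq_diagEval _ _ fun i => by simp [diagEval_single_one]

end DiagEval

section RootOfUnity

variable {A : Type*} [CommRing A] [Algebra ℂ A] {n : ℕ} (ζ : Aˣ)

lemma diagEval_LX (i : Fin n) : diagEval ζ (LX n i) = ζ := by
  simp [LX, diagEval_single_one, Finset.sum_pi_single']

lemma diagEval_LXinv_eq_zpow : diagEval ζ (LXinv n) = ((ζ ^ (-(n : ℤ)) : Aˣ) : A) := by
  simp [LXinv, diagEval_single_one]

variable {ζ} (hζ : ζ ^ (n + 1) = 1)
include hζ

lemma diagEval_LXinv : diagEval ζ (LXinv n) = ζ := by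
  rw [diagEval_LXinv_eq_zpow, (zpow_neg_natCast_eq_self_iff ζ n).2 hζ]

lemma diagEval_Lf : diagEval ζ (Lf n) = (n + 1 : ℂ) • (ζ : A) := by
  simp [Lf, diagEval_LX, diagEval_LXinv hζ, add_smul, Nat.cast_smul_eq_nsmul]

lemma LI_le_ker_diagEval : LI n ≤ RingHom.ker (diagEval ζ) := by
  rw [LI, Ideal.span_le]
  rintro _ ⟨i, rfl⟩
  simp [diagEval_LX, diagEval_LXinv hζ]

end RootOfUnity

section Quotient

variable (n : ℕ)

noncomputable def quotUnit : (LaurentR n ⧸ LI n)ˣ :=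
  Units.map ((Ideal.Quotient.mk (LI n) : LaurentR n →* _).comp (of ℂ _))
    (toUnits (Multiplicative.ofAdd fun _ => -1))

lemma val_quotUnit : (quotUnit n : LaurentR n ⧸ LI n) = Ideal.Quotient.mk (LI n) (LXinv n) := rfl

lemma mkₐ_eq_diagEval : Ideal.Quotient.mkₐ ℂ (LI n) = diagEval (quotUnit n) :=
  eq_diagEval _ _ fun i => by
    rw [val_quotUnit, Ideal.Quotient.mkₐ_eq_mk, Ideal.Quotient.eq]
    exact Ideal.subset_span ⟨i, rfl⟩

lemma quotUnit_pow_succ : quotUnit n ^ (n + 1) = 1 := by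
  refine (zpow_neg_natCast_eq_self_iff _ n).1 (Units.ext ?_)
  rw [← diagEval_LXinv_eq_zpow, ← mkₐ_eq_diagEval]
  rfl

lemma mk_Lf :
    Ideal.Quotient.mk (LI n) (Lf n) = (n + 1 : ℂ) • (quotUnit n : LaurentR n ⧸ LI n) := by
  rw [← Ideal.Quotient.mkₐ_eq_mk ℂ, mkₐ_eq_diagEval, diagEval_Lf (quotUnit_pow_succ n)]

end Quotient

section AdjoinRoot

variable (n : ℕ)

noncomputable def jacobianPoly : ℂ[X] := X ^ (n + 1) - C ((n + 1 : ℂ) ^ (n + 1))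

lemma jacobianPoly_monic : (jacobianPoly n).Monic := monic_X_pow_sub_C _ n.succ_ne_zero

lemma jacobianPoly_natDegree : (jacobianPoly n).natDegree = n + 1 := natDegree_X_pow_sub_C

lemma root_jacobianPoly_pow_succ :
    AdjoinRoot.root (jacobianPoly n) ^ (n + 1) = algebraMap ℂ _ ((n + 1 : ℂ) ^ (n + 1)) := by
  have h := AdjoinRoot.aeval_eq (f := jacobianPoly n) (jacobianPoly n)
  rw [AdjoinRoot.mk_self, jacobianPoly, map_sub, aeval_X_pow, aeval_C, sub_eq_zero] at h
  exact h

noncomputable def rootUnit : (AdjoinRoot (jacobianPoly n))ˣ :=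
  Units.ofPowEqOne _ (n + 1)
    (inv_smul_pow_eq_one (Nat.cast_add_one_ne_zero n) (root_jacobianPoly_pow_succ n))
    n.succ_ne_zero

lemma val_rootUnit :
    (rootUnit n : AdjoinRoot (jacobianPoly n)) = (n + 1 : ℂ)⁻¹ • AdjoinRoot.root _ := rfl

lemma rootUnit_pow_succ : rootUnit n ^ (n + 1) = 1 := Units.pow_ofPowEqOne _ _

noncomputable def adjoinRootToQuot : AdjoinRoot (jacobianPoly n) →ₐ[ℂ] LaurentR n ⧸ LI n :=
  AdjoinRoot.liftAlgHom _ (Algebra.ofId ℂ _) (Ideal.Quotient.mk _ (Lf n)) <| by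
    rw [jacobianPoly, eval₂_sub, eval₂_X_pow, eval₂_C, mk_Lf, _root_.smul_pow,
      ← Units.val_pow_eq_pow_val, quotUnit_pow_succ, Units.val_one]
    simp [Algebra.algebraMap_eq_smul_one]

noncomputable def quotToAdjoinRoot : LaurentR n ⧸ LI n →ₐ[ℂ] AdjoinRoot (jacobianPoly n) :=
  Ideal.Quotient.liftₐ (LI n) (diagEval (rootUnit n))
    fun _ ha => LI_le_ker_diagEval (rootUnit_pow_succ n) ha

lemma adjoinRootToQuot_root :
    adjoinRootToQuot n (AdjoinRoot.root _) = Ideal.Quotient.mk (LI n) (Lf n) :=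
  AdjoinRoot.liftAlgHom_root _ _ _ _

lemma quotToAdjoinRoot_comp_mkₐ :
    (quotToAdjoinRoot n).comp (Ideal.Quotient.mkₐ ℂ (LI n)) = diagEval (rootUnit n) :=
  Ideal.Quotient.liftₐ_comp _ _ _

lemma quotToAdjoinRoot_comp_adjoinRootToQuot :
    (quotToAdjoinRoot n).comp (adjoinRootToQuot n) = AlgHom.id ℂ _ := by
  refine AdjoinRoot.algHom_ext ?_
  calc quotToAdjoinRoot n (adjoinRootToQuot n (AdjoinRoot.root _))
      = diagEval (rootUnit n) (Lf n) := by
        rw [adjoinRootToQuot_root, ← quotToAdjoinRoot_comp_mkₐ, AlgHom.comp_apply,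
          Ideal.Quotient.mkₐ_eq_mk]
    _ = AdjoinRoot.root _ := by
        rw [diagEval_Lf (rootUnit_pow_succ n), val_rootUnit,
          smul_inv_smul₀ (Nat.cast_add_one_ne_zero n)]

lemma adjoinRootToQuot_comp_quotToAdjoinRoot :
    (adjoinRootToQuot n).comp (quotToAdjoinRoot n) = AlgHom.id ℂ _ := by
  refine Ideal.Quotient.algHom_ext ℂ ?_
  have hunit : Units.map (adjoinRootToQuot n : _ →* _) (rootUnit n) = quotUnit n := by
    ext
    rw [Units.coe_map, MonoidHom.coe_coe, val_rootUnit, map_smul, adjoinRootToQuot_root, mk_Lf,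
      inv_smul_smul₀ (Nat.cast_add_one_ne_zero n)]
  rw [AlgHom.comp_assoc, quotToAdjoinRoot_comp_mkₐ, AlgHom.comp_diagEval, hunit, AlgHom.id_comp,
    mkₐ_eq_diagEval]

noncomputable def adjoinRootEquivQuot :
    AdjoinRoot (jacobianPoly n) ≃ₐ[ℂ] LaurentR n ⧸ LI n :=
  AlgEquiv.ofAlgHom _ _ (adjoinRootToQuot_comp_quotToAdjoinRoot n)
    (quotToAdjoinRoot_comp_adjoinRootToQuot n)

end AdjoinRoot

theorem laurent_jacobian_quotient_basis_general (n : ℕ) :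
    (∃ b : Module.Basis (Fin (n + 1)) ℂ (LaurentR n ⧸ LI n),
      ∀ k : Fin (n + 1), b k = Ideal.Quotient.mk (LI n) (Lf n ^ (k : ℕ))) ∧
    Module.finrank ℂ (LaurentR n ⧸ LI n) = n + 1 := by
  let pb := (AdjoinRoot.powerBasis' (jacobianPoly_monic n)).map (adjoinRootEquivQuot n)
  have hdim : pb.dim = n + 1 := jacobianPoly_natDegree n
  have hgen : pb.gen = Ideal.Quotient.mk (LI n) (Lf n) := adjoinRootToQuot_root n
  refine ⟨⟨pb.basis.reindex (finCongr hdim), fun k => ?_⟩, by rw [pb.finrank, hdim]⟩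
  simp [pb.coe_basis, hgen]

/-- The residue classes of `1, f, f², …, f^n` form a `ℂ`-basis of `R/I`;
in particular `R/I` has dimension `n+1` over `ℂ`. -/
theorem laurent_jacobian_quotient_basis (n : ℕ) (hn : 1 ≤ n) :
    (∃ b : Module.Basis (Fin (n + 1)) ℂ (LaurentR n ⧸ LI n),
      ∀ k : Fin (n + 1), b k = Ideal.Quotient.mk (LI n) (Lf n ^ (k : ℕ))) ∧
    Module.finrank ℂ (LaurentR n ⧸ LI n) = n + 1 :=
  laurent_jacobian_quotient_basis_general n
end

section
/- In the abstract Picard–Fuchs setting, assume additionally that for every t ∈ U the 2N functions on V given by h ↦ h^{−1}·∂_cΨ(t,h) and h ↦ h^{−2}·∂_cΨ(t,h) (c ∈ Fin N) are linearly independent over ℂ. Then everywhere on U: (i) A^c_{ab} = A^c_{ba} for all a, b, c (commutativity); (ii) ∂_d A^c_{ab} = ∂_a A^c_{db} for all a, b, c, d (closedness of the matrix-valued 1-form A = Σ_a A^c_{ab} dt^a, i.e. dA = 0); and (iii) Σ_e A^e_{ab}·A^c_{de} = Σ_e A^e_{db}·A^c_{ae} for all a, b, c, d (i.e. [A,A]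 = 0: the product ∂_a ∘ ∂_b := Σ_c A^c_{ab}·∂_c on tangent vectors is associative). -/
/-!
Fix `h ∈ V` and write `F = Ψ(·, h)`. Equality of the mixed partials `∂_a∂_b F = ∂_b∂_a F`,
rewritten with the Picard–Fuchs system, is a relation `Σ_c (A^c_{ab} - A^c_{ba}) h⁻¹ ∂_c F = 0`.
Differentiating the system once more (Leibniz rule, then the system again for `∂_d∂_c F`) and
using `∂_d∂_a∂_b F = ∂_a∂_d∂_b F` gives a relation whose `h⁻¹`-coefficients are those of `dA`
and whose `h⁻²`-coefficients are those of `[A, A]`. Linear independence of the `h⁻¹ ∂_c Ψ` and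
`h⁻² ∂_c Ψ` as functions of `h ∈ V` forces all these coefficients to vanish.
-/

open Complex

/-- Partial derivative `∂_aΨ(t,h)` of `Ψ : ℂ^N × ℂ → ℂ^M` in the `a`-th coordinate
direction of `ℂ^N`. -/
noncomputable def pdt {N M : ℕ} (Ψ : (Fin N → ℂ) → ℂ → (Fin M → ℂ)) (a : Fin N)
    (t : Fin N → ℂ) (h : ℂ) : Fin M → ℂ :=
  deriv (fun z : ℂ => Ψ (Function.update t a z) h) (t a)

/-- Partial derivative `∂_hΨ(t,h)` in the `ℂ`-direction. -/
noncomputable def pdh {N M : ℕ} (Ψ : (Fin N → ℂ) → ℂ → (Fin M → ℂ))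
    (t : Fin N → ℂ) (h : ℂ) : Fin M → ℂ :=
  deriv (Ψ t) h

/-- Partial derivative `∂_aφ(t)` of a scalar function `φ : ℂ^N → ℂ` in the `a`-th
coordinate direction. -/
noncomputable def pdS {N : ℕ} (a : Fin N) (φ : (Fin N → ℂ) → ℂ) (t : Fin N → ℂ) : ℂ :=
  deriv (fun z : ℂ => φ (Function.update t a z)) (t a)

open Filter Function Set Topology

section CoordDeriv

variable {𝕜 ι E : Type*} [NontriviallyNormedField 𝕜] [Fintype ι] [DecidableEq ι]
  [NormedAddCommGroup E] [NormedSpace 𝕜 E]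

/-- Both `pdt` and `pdS` are instances of this partial derivative, definitionally. -/
noncomputable def coordDeriv (a : ι) (G : (ι → 𝕜) → E) (s : ι → 𝕜) : E :=
  deriv (fun z : 𝕜 => G (update s a z)) (s a)

variable {G : (ι → 𝕜) → E} {s : ι → 𝕜}

theorem DifferentiableAt.hasDerivAt_coordDeriv (hG : DifferentiableAt 𝕜 G s) (a : ι) :
    HasDerivAt (fun z : 𝕜 => G (update s a z)) (coordDeriv a G s) (s a) := by
  rw [← update_eq_self a s] at hG
  exact (hG.comp (s a) (hasDerivAt_update s a (s a)).differentiableAt).hasDerivAt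

theorem coordDeriv_eq_fderiv (hG : DifferentiableAt 𝕜 G s) (a : ι) :
    coordDeriv a G s = fderiv 𝕜 G s (Pi.single a 1) := by
  rw [← update_eq_self a s] at hG
  have h := hG.hasFDerivAt.comp_hasDerivAt (s a) (hasDerivAt_update s a (s a))
  rw [update_eq_self] at h
  exact h.deriv

theorem coordDeriv_congr_of_eventuallyEq {G₁ G₂ : (ι → 𝕜) → E} (h : G₁ =ᶠ[𝓝 s] G₂) (a : ι) :
    coordDeriv a G₁ s = coordDeriv a G₂ s := by
  have hcont : Tendsto (update s a) (𝓝 (s a)) (𝓝 s) := by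
    simpa using (hasDerivAt_update s a (s a)).continuousAt.tendsto
  exact EventuallyEq.deriv_eq (hcont.eventually h)

theorem coordDeriv_smul_sum_smul {κ : Type*} [Fintype κ] (μ : 𝕜) {φ : κ → (ι → 𝕜) → 𝕜}
    {H : κ → (ι → 𝕜) → E} (hφ : ∀ c, DifferentiableAt 𝕜 (φ c) s)
    (hH : ∀ c, DifferentiableAt 𝕜 (H c) s) (a : ι) :
    coordDeriv a (fun s => μ • ∑ c, φ c s • H c s) s
      = μ • ∑ c, (coordDeriv a (φ c) s • H c s + φ c s • coordDeriv a (H c) s) := by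
  refine HasDerivAt.deriv (HasDerivAt.fun_const_smul _ (HasDerivAt.fun_sum fun c _ => ?_))
  have h := ((hφ c).hasDerivAt_coordDeriv a).fun_smul ((hH c).hasDerivAt_coordDeriv a)
  rw [update_eq_self] at h
  exact h.congr_deriv (add_comm _ _)

variable {U : Set (ι → 𝕜)} {n : WithTop ℕ∞}

theorem coordDeriv_eqOn_fderiv (hG : DifferentiableOn 𝕜 G U) (hU : IsOpen U) (a : ι) :
    EqOn (coordDeriv a G) (fun s => fderiv 𝕜 G s (Pi.single a 1)) U := fun _ hs =>
  coordDeriv_eq_fderiv (hG.differentiableAt (hU.mem_nhds hs)) a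

theorem ContDiffOn.coordDeriv {m : WithTop ℕ∞} (hG : ContDiffOn 𝕜 n G U) (hU : IsOpen U)
    (hmn : m + 1 ≤ n) (a : ι) : ContDiffOn 𝕜 m (coordDeriv a G) U := by
  have hDG : ContDiffOn 𝕜 m (fun s => fderiv 𝕜 G s (Pi.single a 1)) U :=
    (ContinuousLinearMap.apply 𝕜 E (Pi.single a 1 : ι → 𝕜)).contDiff.comp_contDiffOn
      (hG.fderiv_of_isOpen hU hmn)
  exact hDG.congr
    (coordDeriv_eqOn_fderiv (hG.of_le (le_add_self.trans hmn)).differentiableOn_one hU a)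

theorem coordDeriv_coordDeriv_eq_fderiv_fderiv (hG : ContDiffOn 𝕜 n G U) (hU : IsOpen U)
    (hn : 2 ≤ n) {t : ι → 𝕜} (ht : t ∈ U) (a b : ι) :
    coordDeriv a (coordDeriv b G) t
      = fderiv 𝕜 (fderiv 𝕜 G) t (Pi.single a 1) (Pi.single b 1) := by
  have hDG : DifferentiableAt 𝕜 (fderiv 𝕜 G) t :=
    ((hG.fderiv_of_isOpen hU (m := 1) (one_add_one_eq_two.trans_le hn)).differentiableOn_one)
      |>.differentiableAt (hU.mem_nhds ht)
  have hDGb : DifferentiableAt 𝕜 (fun s => fderiv 𝕜 G s (Pi.single b 1)) t :=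
    hDG.clm_apply (differentiableAt_const _)
  rw [coordDeriv_congr_of_eventuallyEq (eventuallyEq_of_mem (hU.mem_nhds ht)
      (coordDeriv_eqOn_fderiv (hG.of_le (one_le_two.trans hn)).differentiableOn_one hU b)),
    coordDeriv_eq_fderiv hDGb, fderiv_clm_apply hDG (differentiableAt_const _)]
  simp

theorem coordDeriv_comm (hG : ContDiffOn 𝕜 n G U) (hU : IsOpen U)
    (hn : minSmoothness 𝕜 2 ≤ n) {t : ι → 𝕜} (ht : t ∈ U) (a b : ι) :
    coordDeriv a (coordDeriv b G) t = coordDeriv b (coordDeriv a G) t := by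
  have h2 : 2 ≤ n := le_minSmoothness.trans hn
  rw [coordDeriv_coordDeriv_eq_fderiv_fderiv hG hU h2 ht,
    coordDeriv_coordDeriv_eq_fderiv_fderiv hG hU h2 ht,
    (hG.contDiffAt (hU.mem_nhds ht)).isSymmSndFDerivAt hn]

end CoordDeriv

section PicardFuchs

variable {𝕜 ι E : Type*} [NontriviallyNormedField 𝕜] [Fintype ι] [DecidableEq ι]
  [NormedAddCommGroup E] [NormedSpace 𝕜 E]

/-- The system of the paper is the case `F = Ψ(·, h)`, `μ = h⁻¹`. -/
def IsPicardFuchsOn (F : (ι → 𝕜) → E) (A : ι → ι → ι → (ι → 𝕜) → 𝕜) (μ : 𝕜)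
    (U : Set (ι → 𝕜)) : Prop :=
  ∀ a b, ∀ s ∈ U, coordDeriv a (coordDeriv b F) s = μ • ∑ c, A c a b s • coordDeriv c F s

variable {F : (ι → 𝕜) → E} {A : ι → ι → ι → (ι → 𝕜) → 𝕜} {μ : 𝕜} {U : Set (ι → 𝕜)}
  {n : WithTop ℕ∞} {t : ι → 𝕜}

theorem IsPicardFuchsOn.sum_sub_swap_smul_eq_zero (hPF : IsPicardFuchsOn F A μ U)
    (hU : IsOpen U) (hF : ContDiffOn 𝕜 n F U) (hn : minSmoothness 𝕜 2 ≤ n) (ht : t ∈ U)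
    (a b : ι) : ∑ c, (A c a b t - A c b a t) • (μ • coordDeriv c F t) = 0 := by
  have h := coordDeriv_comm hF hU hn ht a b
  rw [hPF a b t ht, hPF b a t ht, ← sub_eq_zero, ← smul_sub, ← Finset.sum_sub_distrib] at h
  simpa only [sub_smul, smul_comm _ μ, Finset.smul_sum] using h

theorem IsPicardFuchsOn.coordDeriv_coordDeriv_coordDeriv (hPF : IsPicardFuchsOn F A μ U)
    (hU : IsOpen U) (hF : ContDiffOn 𝕜 n F U) (hn : 2 ≤ n)
    (hA : ∀ c a b, DifferentiableOn 𝕜 (A c a b) U) (ht : t ∈ U) (a b d : ι) :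
    coordDeriv d (coordDeriv a (coordDeriv b F)) t
      = ∑ c, coordDeriv d (A c a b) t • (μ • coordDeriv c F t)
        + ∑ c, (∑ e, A e a b t * A c d e t) • (μ ^ 2 • coordDeriv c F t) := by
  have hDF : ∀ c, DifferentiableAt 𝕜 (coordDeriv c F) t := fun c =>
    (hF.coordDeriv hU (m := 1) (one_add_one_eq_two.trans_le hn) c).differentiableOn_one
      |>.differentiableAt (hU.mem_nhds ht)
  rw [coordDeriv_congr_of_eventuallyEq (eventuallyEq_of_mem (hU.mem_nhds ht) (hPF a b)),
    coordDeriv_smul_sum_smul μ (fun c => (hA c a b).differentiableAt (hU.mem_nhds ht)) hDF d]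
  simp only [hPF d _ t ht, smul_add, Finset.sum_add_distrib, Finset.smul_sum, Finset.sum_mul,
    Finset.sum_smul, smul_smul]
  congr 1
  · simp only [mul_comm]
  · rw [Finset.sum_comm]
    refine Finset.sum_congr rfl fun c _ => Finset.sum_congr rfl fun e _ => ?_
    congr 1
    ring

theorem IsPicardFuchsOn.flat_assoc_relation (hPF : IsPicardFuchsOn F A μ U)
    (hU : IsOpen U) (hF : ContDiffOn 𝕜 n F U) (hn : minSmoothness 𝕜 3 ≤ n)
    (hA : ∀ c a b, DifferentiableOn 𝕜 (A c a b) U) (ht : t ∈ U) (a b d : ι) :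
    ∑ c, (coordDeriv d (A c a b) t - coordDeriv a (A c d b) t) • (μ • coordDeriv c F t)
      + ∑ c, ((∑ e, A e a b t * A c d e t) - ∑ e, A e d b t * A c a e t)
          • (μ ^ 2 • coordDeriv c F t) = 0 := by
  have hn2 : minSmoothness 𝕜 2 + 1 ≤ n := by rwa [← minSmoothness_add]
  have h2 : 2 ≤ n := le_minSmoothness.trans (le_self_add.trans hn2)
  have h := coordDeriv_comm (hF.coordDeriv hU hn2 b) hU le_rfl ht d a
  rw [hPF.coordDeriv_coordDeriv_coordDeriv hU hF h2 hA ht,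
    hPF.coordDeriv_coordDeriv_coordDeriv hU hF h2 hA ht] at h
  simp only [sub_smul, Finset.sum_sub_distrib]
  rw [sub_add_sub_comm, h, sub_self]

end PicardFuchs

theorem picardFuchs_flat_commutative_associative_general
    (N M : ℕ)
    (U : Set (Fin N → ℂ)) (hU : IsOpen U)
    (V : Set ℂ)
    (Ψ : (Fin N → ℂ) → ℂ → (Fin M → ℂ))
    (hΨ : ContDiffOn ℂ ⊤ (fun p : (Fin N → ℂ) × ℂ => Ψ p.1 p.2) (U ×ˢ V))
    (A : Fin N → Fin N → Fin N → (Fin N → ℂ) → ℂ)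
    (hA : ∀ c a b, DifferentiableOn ℂ (A c a b) U)
    (hPF : ∀ a b : Fin N, ∀ t ∈ U, ∀ h ∈ V,
      pdt (fun t' h' => pdt Ψ b t' h') a t h = h⁻¹ • ∑ c, A c a b t • pdt Ψ c t h)
    (hLI : ∀ t ∈ U, ∀ c d : Fin N → ℂ,
      (∀ h ∈ V,
        (∑ e, c e • (h⁻¹ • pdt Ψ e t h)) + (∑ e, d e • ((h⁻¹) ^ 2 • pdt Ψ e t h)) = 0) →
      (∀ e, c e = 0) ∧ (∀ e, d e = 0)) :
    ∀ t ∈ U,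
      (∀ a b c, A c a b t = A c b a t) ∧
      (∀ a b c d, pdS d (A c a b) t = pdS a (A c d b) t) ∧
      (∀ a b c d, ∑ e, A e a b t * A c d e t = ∑ e, A e d b t * A c a e t) := by
  intro t ht
  have hPF' : ∀ h ∈ V, IsPicardFuchsOn (fun s => Ψ s h) A h⁻¹ U :=
    fun h hh a b s hs => hPF a b s hs h hh
  have hΨ' : ∀ h ∈ V, ContDiffOn ℂ ⊤ (fun s => Ψ s h) U := fun h hh =>
    hΨ.comp (contDiffOn_id.prodMk contDiffOn_const) fun _ hs => ⟨hs, hh⟩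
  have hrel : ∀ a b d, ∀ h ∈ V, _ := fun a b d h hh =>
    (hPF' h hh).flat_assoc_relation hU (hΨ' h hh) le_top hA ht a b d
  refine ⟨fun a b c => ?_, fun a b c d => ?_, fun a b c d => ?_⟩
  · refine sub_eq_zero.mp ((hLI t ht (fun e => A e a b t - A e b a t) 0 fun h hh => ?_).1 c)
    simp only [Pi.zero_apply, zero_smul, Finset.sum_const_zero, add_zero]
    exact (hPF' h hh).sum_sub_swap_smul_eq_zero hU (hΨ' h hh) le_top ht a b
  · exact sub_eq_zero.mp ((hLI t ht _ _ (hrel a b d)).1 c)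
  · exact sub_eq_zero.mp ((hLI t ht _ _ (hrel a b d)).2 c)

/-- Flatness `dA = 0`, commutativity and associativity `[A,A] = 0` of the connection matrix
of the Picard–Fuchs system `∂_a∂_bΨ = h⁻¹ Σ_c A^c_{ab} ∂_cΨ`. -/
theorem picardFuchs_flat_commutative_associative
    (N M : ℕ) (hN : 0 < N) (hM : 0 < M)
    (U : Set (Fin N → ℂ)) (hU : IsOpen U) (hUne : U.Nonempty)
    (V : Set ℂ) (hV : IsOpen V) (hVne : V.Nonempty) (hV0 : (0 : ℂ) ∉ V)
    (Ψ : (Fin N → ℂ) → ℂ → (Fin M → ℂ))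
    (hΨ : ContDiffOn ℂ ⊤ (fun p : (Fin N → ℂ) × ℂ => Ψ p.1 p.2) (U ×ˢ V))
    (A : Fin N → Fin N → Fin N → (Fin N → ℂ) → ℂ)
    (hA : ∀ c a b, DifferentiableOn ℂ (A c a b) U)
    (hPF : ∀ a b : Fin N, ∀ t ∈ U, ∀ h ∈ V,
      pdt (fun t' h' => pdt Ψ b t' h') a t h = h⁻¹ • ∑ c, A c a b t • pdt Ψ c t h)
    (hLI : ∀ t ∈ U, ∀ c d : Fin N → ℂ,
      (∀ h ∈ V,
        (∑ e, c e • (h⁻¹ • pdt Ψ e t h)) + (∑ e, d e • ((h⁻¹) ^ 2 • pdt Ψ e t h)) = 0) →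
      (∀ e, c e = 0) ∧ (∀ e, d e = 0)) :
    ∀ t ∈ U,
      (∀ a b c, A c a b t = A c b a t) ∧
      (∀ a b c d, pdS d (A c a b) t = pdS a (A c d b) t) ∧
      (∀ a b c d, ∑ e, A e a b t * A c d e t = ∑ e, A e d b t * A c a e t) :=
  picardFuchs_flat_commutative_associative_general N M U hU V Ψ hΨ A hA hPF hLI
end

section
/- In the abstract Picard–Fuchs setting, suppose there is a distinguished index 0 ∈ Fin N such that ∂_0Ψ(t,h) = h^{−1}·Ψ(t,h) for all t ∈ U and h ∈ V, and assume that for every t ∈ U the N functions on V given by h ↦ ∂_cΨ(t,h) (c ∈ Fin N) are linearly independent over ℂ. Then A^c_{a0}(t) = δ^c_a for all t ∈ U and all a, c ∈ Fin N; that is, ∂_0 is the identity element for the product ∂_a ∘ ∂_b := Σ_c A^c_{ab}·∂_c. -/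
open Complex

/-!
Applying `∂_a` to `∂₀Ψ = h⁻¹ Ψ` gives `∂_a ∂₀Ψ = h⁻¹ ∂_aΨ`, while the Picard–Fuchs equation
gives `∂_a ∂₀Ψ = h⁻¹ ∑_c A^c_{a0} ∂_cΨ`. Cancelling `h⁻¹ ≠ 0`, the coefficients `A^c_{a0}` express
`∂_aΨ` in the linearly independent family `(∂_cΨ)_c`, so they are `δ^c_a`.
-/

open Filter Topology

lemma eventually_update_mem {ι : Type*} [DecidableEq ι] {X : Type*} [TopologicalSpace X]
    {U : Set (ι → X)} (hU : IsOpen U) {t : ι → X} (ht : t ∈ U) (a : ι) :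
    ∀ᶠ z in 𝓝 (t a), Function.update t a z ∈ U := by
  have hcont : Continuous fun z : X => Function.update t a z :=
    continuous_const.update a continuous_id
  exact hcont.continuousAt.preimage_mem_nhds (by simpa using hU.mem_nhds ht)

lemma pdt_congr_of_eqOn {N M : ℕ} {Φ Ψ : (Fin N → ℂ) → ℂ → (Fin M → ℂ)} {U : Set (Fin N → ℂ)}
    (hU : IsOpen U) {h : ℂ} (hΦΨ : ∀ t ∈ U, Φ t h = Ψ t h) (a : Fin N) {t : Fin N → ℂ}
    (ht : t ∈ U) : pdt Φ a t h = pdt Ψ a t h := by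
  refine EventuallyEq.deriv_eq ?_
  filter_upwards [eventually_update_mem hU ht a] with z hz using hΦΨ _ hz

lemma pdt_const_smul {N M : ℕ} (Ψ : (Fin N → ℂ) → ℂ → (Fin M → ℂ)) (c : ℂ) (a : Fin N)
    (t : Fin N → ℂ) (h : ℂ) : pdt (fun t' h' => c • Ψ t' h') a t h = c • pdt Ψ a t h :=
  deriv_fun_const_smul_field c _

lemma eq_ite_of_sum_smul_eq {ι X R W : Type*} [Fintype ι] [DecidableEq ι] [Ring R]
    [AddCommGroup W] [Module R W] {f : ι → X → W} {V : Set X}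
    (hf : ∀ c : ι → R, (∀ x ∈ V, ∑ e, c e • f e x = 0) → ∀ e, c e = 0)
    {c : ι → R} {a : ι} (hc : ∀ x ∈ V, ∑ e, c e • f e x = f a x) (e : ι) :
    c e = if a = e then 1 else 0 := by
  refine sub_eq_zero.mp (hf (fun e => c e - if a = e then 1 else 0) (fun x hx => ?_) e)
  simp only [sub_smul, Finset.sum_sub_distrib, ite_smul, one_smul, zero_smul,
    Finset.sum_ite_eq, Finset.mem_univ, if_true, hc x hx, sub_self]

theorem picardFuchs_flat_identity_general
    (N M : ℕ)
    (U : Set (Fin N → ℂ)) (hU : IsOpen U)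
    (V : Set ℂ) (hV0 : (0 : ℂ) ∉ V)
    (Ψ : (Fin N → ℂ) → ℂ → (Fin M → ℂ))
    (A : Fin N → Fin N → Fin N → (Fin N → ℂ) → ℂ)
    (hPF : ∀ a b : Fin N, ∀ t ∈ U, ∀ h ∈ V,
      pdt (fun t' h' => pdt Ψ b t' h') a t h = h⁻¹ • ∑ c, A c a b t • pdt Ψ c t h)
    (i0 : Fin N)
    (hi0 : ∀ t ∈ U, ∀ h ∈ V, pdt Ψ i0 t h = h⁻¹ • Ψ t h)
    (hLI : ∀ t ∈ U, ∀ c : Fin N → ℂ,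
      (∀ h ∈ V, ∑ e, c e • pdt Ψ e t h = 0) → ∀ e, c e = 0) :
    ∀ t ∈ U, ∀ a c : Fin N, A c a i0 t = if a = c then 1 else 0 := by
  intro t ht a
  refine eq_ite_of_sum_smul_eq (hLI t ht) fun h hhV => ?_
  have hinv : h⁻¹ ≠ 0 := inv_ne_zero fun h0 => hV0 (h0 ▸ hhV)
  have hpdt_i0 : pdt (fun t' h' => pdt Ψ i0 t' h') a t h = h⁻¹ • pdt Ψ a t h := by
    rw [pdt_congr_of_eqOn (Ψ := fun t' h' => h⁻¹ • Ψ t' h') hU (fun t' ht' => hi0 t' ht' h hhV) a ht,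
      pdt_const_smul]
  exact smul_right_injective _ hinv ((hPF a i0 t ht h hhV).symm.trans hpdt_i0)

/-- If `∂_0Ψ = h⁻¹·Ψ` for a distinguished index `0`, then `∂_0` is the identity for the
product determined by the Picard–Fuchs connection matrix: `A^c_{a0} = δ^c_a`. -/
theorem picardFuchs_flat_identity
    (N M : ℕ) (hN : 0 < N) (hM : 0 < M)
    (U : Set (Fin N → ℂ)) (hU : IsOpen U) (hUne : U.Nonempty)
    (V : Set ℂ) (hV : IsOpen V) (hVne : V.Nonempty) (hV0 : (0 : ℂ) ∉ V)
    (Ψ : (Fin N → ℂ) → ℂ → (Fin M → ℂ))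
    (hΨ : ContDiffOn ℂ ⊤ (fun p : (Fin N → ℂ) × ℂ => Ψ p.1 p.2) (U ×ˢ V))
    (A : Fin N → Fin N → Fin N → (Fin N → ℂ) → ℂ)
    (hA : ∀ c a b, DifferentiableOn ℂ (A c a b) U)
    (hPF : ∀ a b : Fin N, ∀ t ∈ U, ∀ h ∈ V,
      pdt (fun t' h' => pdt Ψ b t' h') a t h = h⁻¹ • ∑ c, A c a b t • pdt Ψ c t h)
    (i0 : Fin N)
    (hi0 : ∀ t ∈ U, ∀ h ∈ V, pdt Ψ i0 t h = h⁻¹ • Ψ t h)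
    (hLI : ∀ t ∈ U, ∀ c : Fin N → ℂ,
      (∀ h ∈ V, ∑ e, c e • pdt Ψ e t h = 0) → ∀ e, c e = 0) :
    ∀ t ∈ U, ∀ a c : Fin N, A c a i0 t = if a = c then 1 else 0 :=
  picardFuchs_flat_identity_general N M U hU V hV0 Ψ A hPF i0 hi0 hLI
end

section
/- In the abstract Picard–Fuchs setting, suppose in addition that E^a : ℂ^N → ℂ (a ∈ Fin N) are ℂ-differentiable functions on U with ∂_hΨ(t,h) = h^{−1}·Σ_a E^a(t)·∂_aΨ(t,h) for all t ∈ U and h ∈ V, and assume that for every t ∈ U the 3N functions on V given by h ↦ h^{−1}·∂_cΨ(t,h), h ↦ h^{−2}·∂_cΨ(t,h), and h ↦ h^{−3}·∂_cΨ(t,h) (c ∈ Fin N) are linearly independent over ℂ. Then everywhere on U: (i) ∂_a∂_b E^c = 0 for all a, b, c (the vector field E = Σ_a E^a ∂_a is affine in the coordinates t); and (ii) for all a, b, c: Σ_e E^e·(∂_e A^c_{ab}) + Σ_e (∂_a E^e)·A^c_{eb} + Σ_e (∂_b E^e)·A^c_{ae} − Σ_e A^e_{ab}·(∂_e E^c)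 = −A^c_{ab}; that is, E acts as a conformal symmetry of the multiplication ∂_a ∘ ∂_b := Σ_c A^c_{ab}·∂_c. -/
open Complex

/-!
Write `G_a = ∂_aΨ`. The Picard–Fuchs system reads `∂_a G_b = h⁻¹ Σ_c A^c_{ab} G_c` and the Euler
equation `∂_hΨ = h⁻¹ Σ_c E^c G_c`, so every derivative of `Ψ` met below is a combination
`Σ_{k ≤ 3} h⁻ᵏ Σ_c x_c(t) G_c`, whose coefficients are unique by the independence hypothesis.
Comparing coefficients in `∂_a ∂_b = ∂_b ∂_a` gives `A^c_{ab} = A^c_{ba}` and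
`∂_e A^c_{ab} = ∂_a A^c_{eb}`. Next,
`∂_h G_a = ∂_a ∂_hΨ = h⁻¹ Σ_c ∂_aE^c G_c + h⁻² Σ_{c,d} E^c A^d_{ac} G_d`; evaluating this at
finitely many `h` and solving by Cramer's rule shows that `∂_aE^c` is differentiable. Finally, the
`h⁻¹` and `h⁻²` coefficients of `∂_b ∂_h G_a = ∂_h ∂_b G_a` give `∂_b ∂_a E^c = 0` and the
conformal identity.
-/

open Filter Topology

section PartialDerivatives

variable {X Y : Type*} [NormedAddCommGroup X] [NormedSpace ℂ X]
  [NormedAddCommGroup Y] [NormedSpace ℂ Y]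

lemma deriv_comp_of_eventuallyEq {γ : ℂ → X} {γ' : X} {z : ℂ} (hγ : HasDerivAt γ γ' z)
    {Φ Φ' : X → Y} (hΦ : Φ =ᶠ[𝓝 (γ z)] Φ') (hΦ' : DifferentiableAt ℂ Φ' (γ z)) :
    deriv (fun w => Φ (γ w)) z = fderiv ℂ Φ' (γ z) γ' :=
  ((hΦ'.hasFDerivAt.comp_hasDerivAt z hγ).congr_of_eventuallyEq
    (hγ.continuousAt.eventually hΦ)).deriv

variable {N M : ℕ}

lemma pdS_eq_fderiv {φ φ' : (Fin N → ℂ) → ℂ} {t : Fin N → ℂ} (hφ : φ =ᶠ[𝓝 t] φ')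
    (hφ' : DifferentiableAt ℂ φ' t) (a : Fin N) :
    pdS a φ t = fderiv ℂ φ' t (Pi.single a 1) := by
  rw [← Function.update_eq_self a t] at hφ hφ'
  simpa [pdS] using deriv_comp_of_eventuallyEq (hasDerivAt_update t a (t a)) hφ hφ'

lemma pdS_pdS_eq_fderiv {U : Set (Fin N → ℂ)} (hU : IsOpen U) {φ : (Fin N → ℂ) → ℂ}
    (hφ : DifferentiableOn ℂ φ U) {t : Fin N → ℂ} (ht : t ∈ U) (a b : Fin N)
    (hφ' : DifferentiableAt ℂ (fun x => fderiv ℂ φ x (Pi.single b 1)) t) :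
    pdS a (pdS b φ) t = fderiv ℂ (fun x => fderiv ℂ φ x (Pi.single b 1)) t (Pi.single a 1) := by
  refine pdS_eq_fderiv ?_ hφ' a
  filter_upwards [hU.mem_nhds ht] with x hx using
    pdS_eq_fderiv EventuallyEq.rfl (hφ.differentiableAt (hU.mem_nhds hx)) b

lemma pdt_eq_fderiv {Ψ : (Fin N → ℂ) → ℂ → (Fin M → ℂ)} {K : (Fin N → ℂ) × ℂ → (Fin M → ℂ)}
    {t : Fin N → ℂ} {h : ℂ} (hΨ : (fun p => Ψ p.1 p.2) =ᶠ[𝓝 (t, h)] K)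
    (hK : DifferentiableAt ℂ K (t, h)) (a : Fin N) :
    pdt Ψ a t h = fderiv ℂ K (t, h) (Pi.single a 1, 0) := by
  rw [← Function.update_eq_self a t] at hΨ hK
  simpa [pdt] using deriv_comp_of_eventuallyEq
    ((hasDerivAt_update t a (t a)).prodMk (hasDerivAt_const (t a) h)) hΨ hK

lemma pdh_eq_fderiv {Ψ : (Fin N → ℂ) → ℂ → (Fin M → ℂ)} {t : Fin N → ℂ} {h : ℂ}
    (hΨ : DifferentiableAt ℂ (fun p : (Fin N → ℂ) × ℂ => Ψ p.1 p.2) (t, h)) :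
    pdh Ψ t h = fderiv ℂ (fun p : (Fin N → ℂ) × ℂ => Ψ p.1 p.2) (t, h) (0, 1) :=
  deriv_comp_of_eventuallyEq ((hasDerivAt_const h t).prodMk (hasDerivAt_id h))
    EventuallyEq.rfl hΨ

end PartialDerivatives

section SecondDerivatives

variable {X Y : Type*} [NormedAddCommGroup X] [NormedSpace ℂ X]
  [NormedAddCommGroup Y] [NormedSpace ℂ Y] {g : X → Y} {s : Set X} {x : X}

lemma ContDiffOn.contDiffOn_fderiv_apply (hg : ContDiffOn ℂ ⊤ g s) (hs : IsOpen s) (w : X) :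
    ContDiffOn ℂ ⊤ (fun y => fderiv ℂ g y w) s :=
  (hg.fderiv_of_isOpen hs (by simp)).clm_apply contDiffOn_const

lemma ContDiffOn.fderiv_fderiv_apply_comm (hg : ContDiffOn ℂ ⊤ g s) (hs : IsOpen s) (hx : x ∈ s)
    (v w : X) :
    fderiv ℂ (fun y => fderiv ℂ g y w) x v = fderiv ℂ (fun y => fderiv ℂ g y v) x w := by
  have hg' : DifferentiableAt ℂ (fderiv ℂ g) x :=
    ((hg.fderiv_of_isOpen hs (m := ⊤) (by simp)).differentiableOn (by simp)).differentiableAt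
      (hs.mem_nhds hx)
  simpa [fderiv_clm_apply hg' (differentiableAt_const _)] using
    (hg.contDiffAt (hs.mem_nhds hx)).isSymmSndFDerivAt (by simp) v w

end SecondDerivatives

section Coefficients

open Matrix

variable {X Y ι : Type*} [NormedAddCommGroup X] [NormedSpace ℂ X]
  [NormedAddCommGroup Y] [NormedSpace ℂ Y] [Fintype ι]

lemma LinearIndependent.exists_det_ne_zero [DecidableEq ι] {β : Type*} {w : ι → β → ℂ}
    (hw : LinearIndependent ℂ w) : ∃ b : ι → β, (of fun i j => w j (b i)).det ≠ 0 := by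
  set col : β → ι → ℂ := fun s j => w j s
  have hspan : Submodule.span ℂ (Set.range col) = ⊤ := by
    by_contra hne
    obtain ⟨f, hf, hker⟩ := Submodule.exists_le_ker_of_lt_top _ (lt_top_iff_ne_top.mpr hne)
    -- a functional killing every `col s` is a vanishing combination of the `w j`
    have hc : ∀ i, (f fun j => if i = j then 1 else 0) = 0 := by
      refine Fintype.linearIndependent_iff.mp hw _ (funext fun s => ?_)
      have := hker (Submodule.subset_span ⟨s, rfl⟩)
      rw [LinearMap.mem_ker, LinearMap.pi_apply_eq_sum_univ] at this
      simpa [col, mul_comm] using this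
    exact hf (LinearMap.ext fun x => by simp [LinearMap.pi_apply_eq_sum_univ f x, hc])
  obtain ⟨S, hScol, hSspan, hSli⟩ := exists_linearIndependent ℂ (Set.range col)
  let e := (Pi.basisFun ℂ ι).indexEquiv (Module.Basis.mk hSli (by simp [hSspan, hspan]))
  choose b hb using fun i => hScol (e i).2
  refine ⟨b, ((isUnit_iff_isUnit_det _).mp ?_).ne_zero⟩
  rw [← linearIndependent_rows_iff_isUnit, show (of fun i j => w j (b i)).row = _ from funext hb]
  exact hSli.comp e e.injective

lemma DifferentiableAt.det [DecidableEq ι] {B : X → Matrix ι ι ℂ} {t : X}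
    (hB : ∀ i j, DifferentiableAt ℂ (fun x => B x i j) t) :
    DifferentiableAt ℂ (fun x => (B x).det) t := by
  simp only [det_apply']
  fun_prop

lemma differentiableAt_of_mulVec_eq [DecidableEq ι] {B : X → Matrix ι ι ℂ} {u q : X → ι → ℂ}
    {t : X} (hB : ∀ i j, DifferentiableAt ℂ (fun x => B x i j) t)
    (hq : ∀ i, DifferentiableAt ℂ (fun x => q x i) t) (hdet : (B t).det ≠ 0)
    (heq : ∀ᶠ x in 𝓝 t, B x *ᵥ u x = q x) (k : ι) :
    DifferentiableAt ℂ (fun x => u x k) t := by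
  have hne : ∀ᶠ x in 𝓝 t, (B x).det ≠ 0 :=
    (DifferentiableAt.det hB).continuousAt.eventually_ne hdet
  have hcramer : (fun x => ((B x).det)⁻¹ * (B x).cramer (q x) k) =ᶠ[𝓝 t] fun x => u x k := by
    filter_upwards [heq, hne] with x hx hd
    rw [← hx, cramer_eq_adjugate_mulVec, mulVec_mulVec, adjugate_mul, smul_mulVec, one_mulVec,
      Pi.smul_apply, smul_eq_mul, inv_mul_cancel_left₀ hd]
  refine DifferentiableAt.congr_of_eventuallyEq ?_ hcramer.symm
  simp only [cramer_apply]
  refine ((DifferentiableAt.det hB).inv hdet).mul (DifferentiableAt.det fun i j => ?_)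
  simp only [updateCol_apply]
  split_ifs
  exacts [hq i, hB i j]

lemma differentiableAt_of_sum_mul_eq {β : Type*} {w : ι → X → β → ℂ} {u : ι → X → ℂ}
    {q : X → β → ℂ} {t : X} (hw : ∀ j s, DifferentiableAt ℂ (fun x => w j x s) t)
    (hq : ∀ s, DifferentiableAt ℂ (fun x => q x s) t) (hli : LinearIndependent ℂ fun j => w j t)
    (heq : ∀ᶠ x in 𝓝 t, ∀ s, ∑ j, u j x * w j x s = q x s) (j : ι) :
    DifferentiableAt ℂ (u j) t := by
  classical
  obtain ⟨b, hb⟩ := hli.exists_det_ne_zero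
  refine differentiableAt_of_mulVec_eq (B := fun x => of fun i j => w j x (b i))
    (u := fun x j => u j x) (q := fun x i => q x (b i)) (fun i j => hw j (b i))
    (fun i => hq (b i)) hb (heq.mono fun x hx => funext fun i => ?_) j
  simp [mulVec, dotProduct, ← hx (b i), mul_comm]

lemma differentiableAt_of_sum_smul_eq {β : Type*} {w : ι → X → β → Y} {u : ι → X → ℂ}
    {q : X → β → Y} {t : X} (hw : ∀ j s, DifferentiableAt ℂ (fun x => w j x s) t)
    (hq : ∀ s, DifferentiableAt ℂ (fun x => q x s) t) (hli : LinearIndependent ℂ fun j => w j t)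
    (heq : ∀ᶠ x in 𝓝 t, ∀ s, ∑ j, u j x • w j x s = q x s) (j : ι) :
    DifferentiableAt ℂ (u j) t := by
  -- test against all continuous functionals, which separate the points of `Y`
  refine differentiableAt_of_sum_mul_eq (β := β × StrongDual ℂ Y)
    (w := fun j x s => s.2 (w j x s.1)) (q := fun x s => s.2 (q x s.1))
    (fun j s => s.2.differentiableAt.comp t (hw j s.1))
    (fun s => s.2.differentiableAt.comp t (hq s.1)) ?_
    (heq.mono fun x hx s => by simp [← hx s.1]) j
  refine Fintype.linearIndependent_iff.mpr fun g hg => Fintype.linearIndependent_iff.mp hli g ?_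
  funext s
  refine SeparatingDual.eq_zero_of_forall_dual_eq_zero (R := ℂ) fun φ => ?_
  simpa using congrFun hg (s, φ)

end Coefficients

section Laurent

variable {X Y ι : Type*} [AddCommGroup Y] [Module ℂ Y] [Fintype ι]

noncomputable def laurent (G : ι → X × ℂ → Y) (k : ℕ) (p : X × ℂ) : (ι → ℂ) →ₗ[ℂ] Y :=
  p.2⁻¹ ^ k • Fintype.linearCombination ℂ fun c => G c p

def IsLaurentIndependent (G : ι → X × ℂ → Y) (U : Set X) (V : Set ℂ) : Prop :=
  ∀ t ∈ U, ∀ x y z : ι → ℂ,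
    (∀ h ∈ V, laurent G 1 (t, h) x + laurent G 2 (t, h) y + laurent G 3 (t, h) z = 0) →
      x = 0 ∧ y = 0 ∧ z = 0

variable {G : ι → X × ℂ → Y} {p : X × ℂ}

lemma laurent_apply (k : ℕ) (x : ι → ℂ) : laurent G k p x = p.2⁻¹ ^ k • ∑ c, x c • G c p := by
  simp [laurent, Fintype.linearCombination_apply]

lemma laurent_apply' (k : ℕ) (x : ι → ℂ) :
    laurent G k p x = ∑ c, x c • (p.2⁻¹ ^ k • G c p) := by
  rw [laurent_apply, Finset.smul_sum]
  exact Finset.sum_congr rfl fun c _ => smul_comm _ _ _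

lemma inv_pow_smul_laurent (j k : ℕ) (x : ι → ℂ) :
    p.2⁻¹ ^ j • laurent G k p x = laurent G (k + j) p x := by
  simp only [laurent_apply, smul_smul, pow_add, mul_comm]

lemma sum_smul_laurent {j : ℕ} (x : ι → ℂ) (z : ι → ι → ℂ) :
    ∑ c, x c • laurent G j p (z c) = laurent G j p (fun d => ∑ c, x c * z c d) := by
  simp only [← map_smul, ← map_sum]
  congr 1
  ext d
  simp

lemma laurent_laurent {H : ι → X × ℂ → Y} {j : ℕ} {z : ι → ι → ℂ}
    (hH : ∀ c, H c p = laurent G j p (z c)) (k : ℕ) (x : ι → ℂ) :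
    laurent H k p x = laurent G (j + k) p (fun d => ∑ c, x c * z c d) := by
  simp only [laurent_apply _ x, hH, sum_smul_laurent, inv_pow_smul_laurent]

lemma laurent_laurent_add {H : ι → X × ℂ → Y} {j j' : ℕ} {z z' : ι → ι → ℂ}
    (hH : ∀ c, H c p = laurent G j p (z c) + laurent G j' p (z' c)) (k : ℕ) (x : ι → ℂ) :
    laurent H k p x = laurent G (j + k) p (fun d => ∑ c, x c * z c d) +
      laurent G (j' + k) p (fun d => ∑ c, x c * z' c d) := by
  simp only [laurent_apply _ x, hH, smul_add, Finset.sum_add_distrib, sum_smul_laurent,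
    inv_pow_smul_laurent]

lemma IsLaurentIndependent.eq {U : Set X} {V : Set ℂ} (hG : IsLaurentIndependent G U V) {t : X}
    (ht : t ∈ U) {x y z x' y' z' : ι → ℂ}
    (heq : ∀ h ∈ V, laurent G 1 (t, h) x + laurent G 2 (t, h) y + laurent G 3 (t, h) z =
      laurent G 1 (t, h) x' + laurent G 2 (t, h) y' + laurent G 3 (t, h) z') :
    x = x' ∧ y = y' ∧ z = z' := by
  obtain ⟨hx, hy, hz⟩ := hG t ht (x - x') (y - y') (z - z') fun h hh => by
    rw [map_sub, map_sub, map_sub, sub_add_sub_comm, sub_add_sub_comm, heq h hh, sub_self]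
  exact ⟨sub_eq_zero.mp hx, sub_eq_zero.mp hy, sub_eq_zero.mp hz⟩

end Laurent

section LaurentCalculus

variable {X Y ι : Type*} [NormedAddCommGroup X] [NormedSpace ℂ X]
  [NormedAddCommGroup Y] [NormedSpace ℂ Y] [Fintype ι]
  {G : ι → X × ℂ → Y} {f : ι → X → ℂ} {p : X × ℂ}

lemma differentiableAt_laurent (hp : p.2 ≠ 0) (hf : ∀ c, DifferentiableAt ℂ (f c) p.1)
    (hG : ∀ c, DifferentiableAt ℂ (G c) p) (k : ℕ) :
    DifferentiableAt ℂ (fun q => laurent G k q fun c => f c q.1) p := by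
  simp only [laurent_apply]
  fun_prop (disch := exact hp)

lemma fderiv_laurent_apply (hp : p.2 ≠ 0) (hf : ∀ c, DifferentiableAt ℂ (f c) p.1)
    (hG : ∀ c, DifferentiableAt ℂ (G c) p) (k : ℕ) (w : X × ℂ) :
    fderiv ℂ (fun q => laurent G k q fun c => f c q.1) p w =
      laurent G k p (fun c => fderiv ℂ (f c) p.1 w.1) +
        laurent (fun c q => fderiv ℂ (G c) q w) k p (fun c => f c p.1) -
        (k * w.2) • laurent G (k + 1) p (fun c => f c p.1) := by
  have hsum : HasFDerivAt (fun q => ∑ c, f c q.1 • G c q)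
      (∑ c, (f c p.1 • fderiv ℂ (G c) p +
        (fderiv ℂ (f c) p.1 ∘L ContinuousLinearMap.fst ℂ X ℂ).smulRight (G c p))) p :=
    HasFDerivAt.fun_sum fun c _ =>
      ((hf c).hasFDerivAt.comp p hasFDerivAt_fst).smul (hG c).hasFDerivAt
  have hpow : HasFDerivAt (fun q : X × ℂ => q.2⁻¹ ^ k)
      ((k * p.2⁻¹ ^ (k - 1) * -(p.2 ^ 2)⁻¹) • ContinuousLinearMap.snd ℂ X ℂ) p :=
    ((hasDerivAt_inv hp).fun_pow k).comp_hasFDerivAt p (hasFDerivAt_snd (𝕜 := ℂ) (p := p))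
  have hk : (k : ℂ) * (p.2 ^ (k - 1))⁻¹ * (p.2 ^ 2)⁻¹ = k * (p.2 ^ (k + 1))⁻¹ := by
    rcases k with _ | k
    · simp
    · rw [Nat.add_sub_cancel, mul_assoc, ← mul_inv, ← pow_add]
  simp only [laurent_apply]
  rw [(hpow.fun_smul hsum).fderiv]
  simp [Finset.sum_add_distrib, hk]
  module

end LaurentCalculus

section PicardFuchs

variable {X Y ι : Type*} [NormedAddCommGroup X] [NormedSpace ℂ X]
  [NormedAddCommGroup Y] [NormedSpace ℂ Y] [Fintype ι]

noncomputable def partials (F : X × ℂ → Y) (v : ι → X) (c : ι) (p : X × ℂ) : Y :=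
  fderiv ℂ F p (v c, 0)

/-- `F` is `Ψ` as a function on `X × ℂ`, the directions `v a` play the role of the coordinate
directions of `ℂ^N`, and `A c a b` is `A^c_{ab}`. -/
structure IsPicardFuchsSystem (U : Set X) (V : Set ℂ) (F : X × ℂ → Y) (v : ι → X)
    (A : ι → ι → ι → X → ℂ) : Prop where
  isOpen_left : IsOpen U
  isOpen_right : IsOpen V
  zero_notMem : (0 : ℂ) ∉ V
  contDiffOn : ContDiffOn ℂ ⊤ F (U ×ˢ V)
  differentiableOn : ∀ c a b, DifferentiableOn ℂ (A c a b) U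
  fderiv_partials : ∀ a b, ∀ p ∈ U ×ˢ V,
    fderiv ℂ (partials F v b) p (v a, 0) = laurent (partials F v) 1 p fun c => A c a b p.1

structure IsEulerField (U : Set X) (V : Set ℂ) (F : X × ℂ → Y) (v : ι → X)
    (E : ι → X → ℂ) : Prop where
  differentiableOn : ∀ c, DifferentiableOn ℂ (E c) U
  fderiv_snd : ∀ p ∈ U ×ˢ V, fderiv ℂ F p (0, 1) = laurent (partials F v) 1 p fun c => E c p.1

namespace IsPicardFuchsSystem

variable {U : Set X} {V : Set ℂ} {F : X × ℂ → Y} {v : ι → X} {A : ι → ι → ι → X → ℂ}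
  {E : ι → X → ℂ} {p : X × ℂ} {t : X} {h : ℂ}

lemma isOpen (hS : IsPicardFuchsSystem U V F v A) : IsOpen (U ×ˢ V) :=
  hS.isOpen_left.prod hS.isOpen_right

lemma snd_ne_zero (hS : IsPicardFuchsSystem U V F v A) (hp : p ∈ U ×ˢ V) : p.2 ≠ 0 :=
  fun h => hS.zero_notMem (h ▸ hp.2)

lemma differentiableAt (hS : IsPicardFuchsSystem U V F v A) (hp : p ∈ U ×ˢ V) :
    DifferentiableAt ℂ F p :=
  (hS.contDiffOn.differentiableOn (by simp)).differentiableAt (hS.isOpen.mem_nhds hp)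

lemma contDiffOn_partials (hS : IsPicardFuchsSystem U V F v A) (c : ι) :
    ContDiffOn ℂ ⊤ (partials F v c) (U ×ˢ V) :=
  hS.contDiffOn.contDiffOn_fderiv_apply hS.isOpen _

lemma differentiableAt_partials (hS : IsPicardFuchsSystem U V F v A) (hp : p ∈ U ×ˢ V)
    (c : ι) : DifferentiableAt ℂ (partials F v c) p :=
  ((hS.contDiffOn_partials c).differentiableOn (by simp)).differentiableAt
    (hS.isOpen.mem_nhds hp)

lemma differentiableAt_coeff (hS : IsPicardFuchsSystem U V F v A) (ht : t ∈ U) (c a b : ι) :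
    DifferentiableAt ℂ (A c a b) t :=
  (hS.differentiableOn c a b).differentiableAt (hS.isOpen_left.mem_nhds ht)

lemma fderiv_laurent_partials (hS : IsPicardFuchsSystem U V F v A) {f : ι → X → ℂ}
    (hp : (t, h) ∈ U ×ˢ V) (hf : ∀ c, DifferentiableAt ℂ (f c) t) (k : ℕ) (b : ι) :
    fderiv ℂ (fun q => laurent (partials F v) k q fun c => f c q.1) (t, h) (v b, 0) =
      laurent (partials F v) k (t, h) (fun c => fderiv ℂ (f c) t (v b)) +
        laurent (partials F v) (k + 1) (t, h) (fun d => ∑ c, f c t * A d b c t) := by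
  rw [fderiv_laurent_apply (hS.snd_ne_zero hp) hf (hS.differentiableAt_partials hp),
    laurent_laurent (H := fun c q => fderiv ℂ (partials F v c) q (v b, 0))
      (fun c => hS.fderiv_partials b c _ hp), add_comm 1 k]
  simp

lemma coeff_symm (hS : IsPicardFuchsSystem U V F v A)
    (hLI : IsLaurentIndependent (partials F v) U V) (ht : t ∈ U) (c a b : ι) :
    A c a b t = A c b a t := by
  refine congrFun (hLI.eq ht (x := fun c => A c a b t) (x' := fun c => A c b a t)
    (y := 0) (z := 0) (y' := 0) (z' := 0) fun h hh => ?_).1 c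
  have hp : (t, h) ∈ U ×ˢ V := ⟨ht, hh⟩
  rw [← hS.fderiv_partials a b _ hp, ← hS.fderiv_partials b a _ hp]
  exact congrArg (· + _ + _) (hS.contDiffOn.fderiv_fderiv_apply_comm hS.isOpen hp _ _)

lemma fderiv_fderiv_partials_fst_fst (hS : IsPicardFuchsSystem U V F v A)
    (hp : (t, h) ∈ U ×ˢ V) (a b c : ι) :
    fderiv ℂ (fun q => fderiv ℂ (partials F v a) q (v c, 0)) (t, h) (v b, 0) =
      laurent (partials F v) 1 (t, h) (fun d => fderiv ℂ (A d c a) t (v b)) +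
        laurent (partials F v) 2 (t, h) (fun d => ∑ e, A e c a t * A d b e t) := by
  have hPF : (fun q => fderiv ℂ (partials F v a) q (v c, 0)) =ᶠ[𝓝 (t, h)]
      fun q => laurent (partials F v) 1 q fun e => A e c a q.1 := by
    filter_upwards [hS.isOpen.mem_nhds hp] with q hq using hS.fderiv_partials c a q hq
  rw [hPF.fderiv_eq]
  exact hS.fderiv_laurent_partials hp (fun e => hS.differentiableAt_coeff hp.1 e c a) 1 b

lemma fderiv_coeff_comm (hS : IsPicardFuchsSystem U V F v A)
    (hLI : IsLaurentIndependent (partials F v) U V) (ht : t ∈ U) (d a b c : ι) :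
    fderiv ℂ (A d a c) t (v b) = fderiv ℂ (A d a b) t (v c) := by
  have hsymm : ∀ e, A d e a =ᶠ[𝓝 t] A d a e := fun e => by
    filter_upwards [hS.isOpen_left.mem_nhds ht] with x hx using hS.coeff_symm hLI hx d e a
  obtain ⟨hx, -, -⟩ := hLI.eq ht (z := 0) (z' := 0) fun h hh => by
    have hp : (t, h) ∈ U ×ˢ V := ⟨ht, hh⟩
    exact congrArg (· + _) (((hS.fderiv_fderiv_partials_fst_fst hp a b c).symm.trans
      ((hS.contDiffOn_partials a).fderiv_fderiv_apply_comm hS.isOpen hp _ _)).trans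
      (hS.fderiv_fderiv_partials_fst_fst hp a c b))
  rw [← (hsymm c).fderiv_eq, ← (hsymm b).fderiv_eq]
  exact congrFun hx d

lemma fderiv_partials_snd (hS : IsPicardFuchsSystem U V F v A) (hE : IsEulerField U V F v E)
    (hp : (t, h) ∈ U ×ˢ V) (a : ι) :
    fderiv ℂ (partials F v a) (t, h) (0, 1) =
      laurent (partials F v) 1 (t, h) (fun c => fderiv ℂ (E c) t (v a)) +
        laurent (partials F v) 2 (t, h) (fun d => ∑ c, E c t * A d a c t) := by
  have hEuler : (fun q => fderiv ℂ F q (0, 1)) =ᶠ[𝓝 (t, h)]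
      fun q => laurent (partials F v) 1 q fun c => E c q.1 := by
    filter_upwards [hS.isOpen.mem_nhds hp] with q hq using hE.fderiv_snd q hq
  refine (hS.contDiffOn.fderiv_fderiv_apply_comm hS.isOpen hp (0, 1) (v a, 0)).trans ?_
  rw [hEuler.fderiv_eq]
  exact hS.fderiv_laurent_partials hp
    (fun c => (hE.differentiableOn c).differentiableAt (hS.isOpen_left.mem_nhds hp.1)) 1 a

/-- `∂_aE^c` is a coefficient of `∂_h G_a` on the independent family `h⁻¹ G_c, h⁻² G_c`,
everything else in that expansion being differentiable in `t`. -/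
lemma differentiableAt_fderiv_euler (hS : IsPicardFuchsSystem U V F v A)
    (hLI : IsLaurentIndependent (partials F v) U V) (hE : IsEulerField U V F v E) (ht : t ∈ U)
    (a c : ι) : DifferentiableAt ℂ (fun x => fderiv ℂ (E c) x (v a)) t := by
  have hslice : ∀ {G : X × ℂ → Y}, ContDiffOn ℂ ⊤ G (U ×ˢ V) → ∀ h : V,
      DifferentiableAt ℂ (fun x => G (x, h)) t := fun hG h =>
    ((hG.differentiableOn (by simp)).differentiableAt (hS.isOpen.mem_nhds ⟨ht, h.2⟩)).comp t
      (differentiableAt_id.prodMk (differentiableAt_const _))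
  refine differentiableAt_of_sum_smul_eq (β := V) (ι := ι ⊕ ι)
    (w := fun j x h => Sum.elim (fun c => (h : ℂ)⁻¹ ^ 1 • partials F v c (x, h))
      (fun c => (h : ℂ)⁻¹ ^ 2 • partials F v c (x, h)) j)
    (u := Sum.elim (fun c x => fderiv ℂ (E c) x (v a)) (fun c x => ∑ e, E e x * A c a e x))
    (q := fun x h => fderiv ℂ (partials F v a) (x, h) (0, 1))
    ?_ (hslice ((hS.contDiffOn_partials a).contDiffOn_fderiv_apply hS.isOpen _)) ?_ ?_
    (Sum.inl c)
  · rintro (e | e) h <;> exact (hslice (hS.contDiffOn_partials e) h).const_smul _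
  · refine Fintype.linearIndependent_iff.mpr fun g hg => ?_
    obtain ⟨h1, h2, -⟩ := hLI t ht (g ∘ Sum.inl) (g ∘ Sum.inr) 0 fun h hh => by
      simpa [laurent_apply', Fintype.sum_sum_type] using congrFun hg ⟨h, hh⟩
    rintro (e | e)
    exacts [congrFun h1 e, congrFun h2 e]
  · filter_upwards [hS.isOpen_left.mem_nhds ht] with x hx h
    rw [hS.fderiv_partials_snd hE ⟨hx, h.2⟩ a, laurent_apply', laurent_apply',
      Fintype.sum_sum_type]
    rfl

lemma fderiv_fderiv_partials_snd_fst (hS : IsPicardFuchsSystem U V F v A)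
    (hLI : IsLaurentIndependent (partials F v) U V) (hE : IsEulerField U V F v E)
    (hp : (t, h) ∈ U ×ˢ V) (a b : ι) :
    fderiv ℂ (fun q => fderiv ℂ (partials F v a) q (0, 1)) (t, h) (v b, 0) =
      laurent (partials F v) 1 (t, h)
          (fun c => fderiv ℂ (fun x => fderiv ℂ (E c) x (v a)) t (v b)) +
        laurent (partials F v) 2 (t, h) ((fun d => ∑ c, fderiv ℂ (E c) t (v a) * A d b c t) +
          fun d => fderiv ℂ (fun x => ∑ c, E c x * A d a c x) t (v b)) +
        laurent (partials F v) 3 (t, h)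
          (fun d => ∑ c, (∑ e, E e t * A c a e t) * A d b c t) := by
  have hdE : ∀ c, DifferentiableAt ℂ (fun x => fderiv ℂ (E c) x (v a)) t :=
    hS.differentiableAt_fderiv_euler hLI hE hp.1 a
  have hy : ∀ d, DifferentiableAt ℂ (fun x => ∑ c, E c x * A d a c x) t := fun d =>
    DifferentiableAt.fun_sum fun c _ =>
      ((hE.differentiableOn c).differentiableAt (hS.isOpen_left.mem_nhds hp.1)).mul
        (hS.differentiableAt_coeff hp.1 d a c)
  have hP : (fun q => fderiv ℂ (partials F v a) q (0, 1)) =ᶠ[𝓝 (t, h)] fun q =>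
      (laurent (partials F v) 1 q fun c => fderiv ℂ (E c) q.1 (v a)) +
        laurent (partials F v) 2 q fun d => ∑ c, E c q.1 * A d a c q.1 := by
    filter_upwards [hS.isOpen.mem_nhds hp] with q hq using hS.fderiv_partials_snd hE hq a
  rw [hP.fderiv_eq, fderiv_fun_add
    (differentiableAt_laurent (hS.snd_ne_zero hp) hdE (hS.differentiableAt_partials hp) 1)
    (differentiableAt_laurent (hS.snd_ne_zero hp) hy (hS.differentiableAt_partials hp) 2),
    add_apply, hS.fderiv_laurent_partials hp hdE, hS.fderiv_laurent_partials hp hy, map_add]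
  abel

lemma fderiv_fderiv_partials_fst_snd (hS : IsPicardFuchsSystem U V F v A)
    (hE : IsEulerField U V F v E) (hp : (t, h) ∈ U ×ˢ V) (a b : ι) :
    fderiv ℂ (fun q => fderiv ℂ (partials F v a) q (v b, 0)) (t, h) (0, 1) =
      laurent (partials F v) 1 (t, h) 0 +
        laurent (partials F v) 2 (t, h)
          ((fun d => ∑ c, A c b a t * fderiv ℂ (E d) t (v c)) - fun d => A d b a t) +
        laurent (partials F v) 3 (t, h) (fun d => ∑ c, A c b a t * ∑ e, E e t * A d c e t) := by
  have hPF : (fun q => fderiv ℂ (partials F v a) q (v b, 0)) =ᶠ[𝓝 (t, h)]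
      fun q => laurent (partials F v) 1 q fun c => A c b a q.1 := by
    filter_upwards [hS.isOpen.mem_nhds hp] with q hq using hS.fderiv_partials b a q hq
  rw [hPF.fderiv_eq, fderiv_laurent_apply (hS.snd_ne_zero hp)
    (fun c => hS.differentiableAt_coeff hp.1 c b a) (hS.differentiableAt_partials hp),
    laurent_laurent_add (H := fun c q => fderiv ℂ (partials F v c) q (0, 1))
      (fun c => hS.fderiv_partials_snd hE hp c)]
  simp only [map_zero, map_sub, Nat.cast_one, mul_one, one_smul, Nat.reduceAdd]
  rw [show (fun _ : ι => (0 : ℂ)) = 0 from rfl, map_zero]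
  abel

lemma euler_coeff_identities (hS : IsPicardFuchsSystem U V F v A)
    (hLI : IsLaurentIndependent (partials F v) U V) (hE : IsEulerField U V F v E) (ht : t ∈ U)
    (a b : ι) :
    (fun c => fderiv ℂ (fun x => fderiv ℂ (E c) x (v a)) t (v b)) = 0 ∧
      ((fun d => ∑ c, fderiv ℂ (E c) t (v a) * A d b c t) +
        fun d => fderiv ℂ (fun x => ∑ c, E c x * A d a c x) t (v b)) =
      (fun d => ∑ c, A c b a t * fderiv ℂ (E d) t (v c)) - fun d => A d b a t := by
  obtain ⟨hx, hy, -⟩ := hLI.eq ht fun h hh =>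
    (hS.fderiv_fderiv_partials_snd_fst hLI hE ⟨ht, hh⟩ a b).symm.trans
      (((hS.contDiffOn_partials a).fderiv_fderiv_apply_comm hS.isOpen ⟨ht, hh⟩ _ _).trans
        (hS.fderiv_fderiv_partials_fst_snd hE ⟨ht, hh⟩ a b))
  exact ⟨hx, hy⟩

lemma fderiv_euler_conformal (hS : IsPicardFuchsSystem U V F v A)
    (hLI : IsLaurentIndependent (partials F v) U V) (hE : IsEulerField U V F v E) (ht : t ∈ U)
    (a b c : ι) :
    (∑ e, E e t * fderiv ℂ (A c a b) t (v e)) + (∑ e, fderiv ℂ (E e) t (v a) * A c e b t) +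
        (∑ e, fderiv ℂ (E e) t (v b) * A c a e t) - (∑ e, A e a b t * fderiv ℂ (E c) t (v e)) =
      -A c a b t := by
  have hEd : ∀ e, DifferentiableAt ℂ (E e) t := fun e =>
    (hE.differentiableOn e).differentiableAt (hS.isOpen_left.mem_nhds ht)
  have hy : fderiv ℂ (fun x => ∑ e, E e x * A c a e x) t (v b) =
      ∑ e, (E e t * fderiv ℂ (A c a e) t (v b) + A c a e t * fderiv ℂ (E e) t (v b)) := by
    rw [(HasFDerivAt.fun_sum (u := Finset.univ) fun e _ =>
      (hEd e).hasFDerivAt.fun_mul (hS.differentiableAt_coeff ht c a e).hasFDerivAt).fderiv]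
    simp
  have key := congrFun (hS.euler_coeff_identities hLI hE ht a b).2 c
  simp only [Pi.add_apply, Pi.sub_apply, hy, Finset.sum_add_distrib,
    hS.fderiv_coeff_comm hLI ht c a b, hS.coeff_symm hLI ht _ b, mul_comm (A c a _ t)] at key
  linear_combination key

end IsPicardFuchsSystem

end PicardFuchs

section Coordinates

variable {N M : ℕ} {U : Set (Fin N → ℂ)} {V : Set ℂ} {Ψ : (Fin N → ℂ) → ℂ → (Fin M → ℂ)}

lemma pdt_eq_partials {t : Fin N → ℂ} {h : ℂ}
    (hΨ : DifferentiableAt ℂ (fun p : (Fin N → ℂ) × ℂ => Ψ p.1 p.2) (t, h)) (a : Fin N) :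
    pdt Ψ a t h = partials (fun p => Ψ p.1 p.2) (fun a => Pi.single a 1) a (t, h) :=
  pdt_eq_fderiv EventuallyEq.rfl hΨ a

lemma isPicardFuchsSystem_of_pdt {A : Fin N → Fin N → Fin N → (Fin N → ℂ) → ℂ} (hU : IsOpen U)
    (hV : IsOpen V) (hV0 : (0 : ℂ) ∉ V)
    (hΨ : ContDiffOn ℂ ⊤ (fun p : (Fin N → ℂ) × ℂ => Ψ p.1 p.2) (U ×ˢ V))
    (hA : ∀ c a b, DifferentiableOn ℂ (A c a b) U)
    (hPF : ∀ a b : Fin N, ∀ t ∈ U, ∀ h ∈ V,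
      pdt (fun t' h' => pdt Ψ b t' h') a t h = h⁻¹ • ∑ c, A c a b t • pdt Ψ c t h) :
    IsPicardFuchsSystem U V (fun p => Ψ p.1 p.2) (fun a => Pi.single a 1) A := by
  have hs : IsOpen (U ×ˢ V) := hU.prod hV
  have hΨd : ∀ p ∈ U ×ˢ V, DifferentiableAt ℂ (fun p : (Fin N → ℂ) × ℂ => Ψ p.1 p.2) p :=
    fun p hp => (hΨ.differentiableOn (by simp)).differentiableAt (hs.mem_nhds hp)
  refine ⟨hU, hV, hV0, hΨ, hA, fun a b p hp => ?_⟩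
  have hpdt : (fun q : (Fin N → ℂ) × ℂ => pdt Ψ b q.1 q.2) =ᶠ[𝓝 p]
      partials (fun p => Ψ p.1 p.2) (fun a => Pi.single a 1) b := by
    filter_upwards [hs.mem_nhds hp] with q hq using pdt_eq_partials (hΨd q hq) b
  rw [← pdt_eq_fderiv hpdt (((hΨ.contDiffOn_fderiv_apply hs _).differentiableOn
    (by simp)).differentiableAt (hs.mem_nhds hp)) a, hPF a b p.1 hp.1 p.2 hp.2, laurent_apply,
    pow_one]
  simp only [pdt_eq_partials (hΨd p hp)]

lemma isEulerField_of_pdh {E : Fin N → (Fin N → ℂ) → ℂ}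
    (hΨ : ∀ p ∈ U ×ˢ V, DifferentiableAt ℂ (fun p : (Fin N → ℂ) × ℂ => Ψ p.1 p.2) p)
    (hE : ∀ a, DifferentiableOn ℂ (E a) U)
    (hEuler : ∀ t ∈ U, ∀ h ∈ V, pdh Ψ t h = h⁻¹ • ∑ a, E a t • pdt Ψ a t h) :
    IsEulerField U V (fun p => Ψ p.1 p.2) (fun a => Pi.single a 1) E := by
  refine ⟨hE, fun ⟨t, h⟩ hp => ?_⟩
  rw [← pdh_eq_fderiv (hΨ _ hp), hEuler t hp.1 h hp.2, laurent_apply, pow_one]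
  simp only [pdt_eq_partials (hΨ _ hp)]

lemma isLaurentIndependent_of_pdt
    (hΨ : ∀ p ∈ U ×ˢ V, DifferentiableAt ℂ (fun p : (Fin N → ℂ) × ℂ => Ψ p.1 p.2) p)
    (hLI : ∀ t ∈ U, ∀ c d e : Fin N → ℂ,
      (∀ h ∈ V,
        (∑ a, c a • (h⁻¹ • pdt Ψ a t h)) + (∑ a, d a • ((h⁻¹) ^ 2 • pdt Ψ a t h)) +
          (∑ a, e a • ((h⁻¹) ^ 3 • pdt Ψ a t h)) = 0) →
      (∀ a, c a = 0) ∧ (∀ a, d a = 0) ∧ (∀ a, e a = 0)) :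
    IsLaurentIndependent (partials (fun p => Ψ p.1 p.2) fun a => Pi.single a 1) U V := by
  intro t ht x y z hxyz
  obtain ⟨hx, hy, hz⟩ := hLI t ht x y z fun h hh => by
    simpa only [laurent_apply', pow_one, pdt_eq_partials (hΨ _ ⟨ht, hh⟩)] using hxyz h hh
  exact ⟨funext hx, funext hy, funext hz⟩

end Coordinates

theorem picardFuchs_euler_conformal_symmetry_general
    (N M : ℕ)
    (U : Set (Fin N → ℂ)) (hU : IsOpen U)
    (V : Set ℂ) (hV : IsOpen V) (hV0 : (0 : ℂ) ∉ V)
    (Ψ : (Fin N → ℂ) → ℂ → (Fin M → ℂ))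
    (hΨ : ContDiffOn ℂ ⊤ (fun p : (Fin N → ℂ) × ℂ => Ψ p.1 p.2) (U ×ˢ V))
    (A : Fin N → Fin N → Fin N → (Fin N → ℂ) → ℂ)
    (hA : ∀ c a b, DifferentiableOn ℂ (A c a b) U)
    (hPF : ∀ a b : Fin N, ∀ t ∈ U, ∀ h ∈ V,
      pdt (fun t' h' => pdt Ψ b t' h') a t h = h⁻¹ • ∑ c, A c a b t • pdt Ψ c t h)
    (E : Fin N → (Fin N → ℂ) → ℂ)
    (hE : ∀ a, DifferentiableOn ℂ (E a) U)
    (hEuler : ∀ t ∈ U, ∀ h ∈ V, pdh Ψ t h = h⁻¹ • ∑ a, E a t • pdt Ψ a t h)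
    (hLI : ∀ t ∈ U, ∀ c d e : Fin N → ℂ,
      (∀ h ∈ V,
        (∑ a, c a • (h⁻¹ • pdt Ψ a t h)) + (∑ a, d a • ((h⁻¹) ^ 2 • pdt Ψ a t h)) +
          (∑ a, e a • ((h⁻¹) ^ 3 • pdt Ψ a t h)) = 0) →
      (∀ a, c a = 0) ∧ (∀ a, d a = 0) ∧ (∀ a, e a = 0)) :
    ∀ t ∈ U,
      (∀ a b c, pdS a (fun s => pdS b (E c) s) t = 0) ∧
      (∀ a b c,
        (∑ e', E e' t * pdS e' (A c a b) t) + (∑ e', pdS a (E e') t * A c e' b t) +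
            (∑ e', pdS b (E e') t * A c a e' t) - (∑ e', A e' a b t * pdS e' (E c) t) =
          -(A c a b t)) := by
  have hS := isPicardFuchsSystem_of_pdt hU hV hV0 hΨ hA hPF
  have hE' := isEulerField_of_pdh (fun p hp => hS.differentiableAt hp) hE hEuler
  have hLI' := isLaurentIndependent_of_pdt (fun p hp => hS.differentiableAt hp) hLI
  intro t ht
  refine ⟨fun a b c => ?_, fun a b c => ?_⟩
  · refine (pdS_pdS_eq_fderiv hU (hE c) ht a b ?_).trans ?_
    · exact hS.differentiableAt_fderiv_euler hLI' hE' ht b c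
    · exact congrFun (hS.euler_coeff_identities hLI' hE' ht b a).1 c
  · simp only [fun e => pdS_eq_fderiv EventuallyEq.rfl ((hE e).differentiableAt (hU.mem_nhds ht)),
      pdS_eq_fderiv EventuallyEq.rfl (hS.differentiableAt_coeff ht c a b)]
    exact hS.fderiv_euler_conformal hLI' hE' ht a b c

/-- The Euler vector field `E = Σ_a E^a ∂_a` obtained from `∂_hΨ = h⁻¹ Σ_a E^a ∂_aΨ`
is affine in the flat coordinates and acts as a conformal symmetry of the
multiplication `∂_a ∘ ∂_b = Σ_c A^c_{ab} ∂_c`. -/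
theorem picardFuchs_euler_conformal_symmetry
    (N M : ℕ) (hN : 0 < N) (hM : 0 < M)
    (U : Set (Fin N → ℂ)) (hU : IsOpen U) (hUne : U.Nonempty)
    (V : Set ℂ) (hV : IsOpen V) (hVne : V.Nonempty) (hV0 : (0 : ℂ) ∉ V)
    (Ψ : (Fin N → ℂ) → ℂ → (Fin M → ℂ))
    (hΨ : ContDiffOn ℂ ⊤ (fun p : (Fin N → ℂ) × ℂ => Ψ p.1 p.2) (U ×ˢ V))
    (A : Fin N → Fin N → Fin N → (Fin N → ℂ) → ℂ)
    (hA : ∀ c a b, DifferentiableOn ℂ (A c a b) U)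
    (hPF : ∀ a b : Fin N, ∀ t ∈ U, ∀ h ∈ V,
      pdt (fun t' h' => pdt Ψ b t' h') a t h = h⁻¹ • ∑ c, A c a b t • pdt Ψ c t h)
    (E : Fin N → (Fin N → ℂ) → ℂ)
    (hE : ∀ a, DifferentiableOn ℂ (E a) U)
    (hEuler : ∀ t ∈ U, ∀ h ∈ V, pdh Ψ t h = h⁻¹ • ∑ a, E a t • pdt Ψ a t h)
    (hLI : ∀ t ∈ U, ∀ c d e : Fin N → ℂ,
      (∀ h ∈ V,
        (∑ a, c a • (h⁻¹ • pdt Ψ a t h)) + (∑ a, d a • ((h⁻¹) ^ 2 • pdt Ψ a t h)) +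
          (∑ a, e a • ((h⁻¹) ^ 3 • pdt Ψ a t h)) = 0) →
      (∀ a, c a = 0) ∧ (∀ a, d a = 0) ∧ (∀ a, e a = 0)) :
    ∀ t ∈ U,
      (∀ a b c, pdS a (fun s => pdS b (E c) s) t = 0) ∧
      (∀ a b c,
        (∑ e', E e' t * pdS e' (A c a b) t) + (∑ e', pdS a (E e') t * A c e' b t) +
            (∑ e', pdS b (E e') t * A c a e' t) - (∑ e', A e' a b t * pdS e' (E c) t) =
          -(A c a b t)) :=
  picardFuchs_euler_conformal_symmetry_general N M U hU V hV hV0 Ψ hΨ A hA hPF E hE hEuler hLI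
end

section
/- Let n ≥ 1 and let Φ be a formal power series in the variables y_1,…,y_n over ℂ (an element of MvPowerSeries (Fin n) ℂ). Suppose Φ satisfies the formal Euler equation Σ_{k=1}^{n} (k−1)·y_k·(∂Φ/∂y_k) − (n+1)·(∂Φ/∂y_1) = (n−3)·Φ, where ∂/∂y_k denotes the formal partial derivative of power series. Then for every multi-index m = (m_1,…,m_n) ∈ ℕ^n: (n+1)·(m_1+1)·coeff_{m+e_1}(Φ) = (3 − n + Σ_{k=2}^{n} (k−1)·m_k)·coeff_m(Φ), where e_1 is the multi-index (1,0,…,0). Equivalently, writing Φ = Σ_m σ(m_1,…,m_n)·y_1^{m_1}⋯y_n^{m_n}/(m_1!⋯m_n!), the coefficients satisfy σ(m_1+1, m_2,…,m_n) = ((3 − n + Σ_{k=2}^{n}(k−1)·m_k)/(n+1))·σ(m_1,…,m_n). -/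
open Complex

/-- The formal partial derivative `∂Φ/∂y_k` of a multivariate formal power series. -/
noncomputable def mvPder {n : ℕ} (k : Fin n) (Φ : MvPowerSeries (Fin n) ℂ) :
    MvPowerSeries (Fin n) ℂ :=
  fun m => ((m k : ℂ) + 1) * MvPowerSeries.coeff (m + Finsupp.single k 1) Φ

/-!
Each monomial `y^m` is an eigenvector of `Σ_k (k−1) y_k ∂/∂y_k` with eigenvalue `Σ_k (k−1) m_k`,
so the coefficient of `y^m` in the Euler equation involves only `coeff_m Φ` and, through
`∂/∂y_1`, `coeff_{m+e_1} Φ`.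
-/

lemma coeff_mvPder {n : ℕ} (k : Fin n) (Φ : MvPowerSeries (Fin n) ℂ) (m : Fin n →₀ ℕ) :
    MvPowerSeries.coeff m (mvPder k Φ)
      = ((m k : ℂ) + 1) * MvPowerSeries.coeff (m + Finsupp.single k 1) Φ := rfl

lemma coeff_X_mul_mvPder {n : ℕ} (k : Fin n) (Φ : MvPowerSeries (Fin n) ℂ)
    (m : Fin n →₀ ℕ) :
    MvPowerSeries.coeff m (MvPowerSeries.X k * mvPder k Φ)
      = (m k : ℂ) * MvPowerSeries.coeff m Φ := by
  rw [MvPowerSeries.X, MvPowerSeries.coeff_monomial_mul]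
  split_ifs with hk <;> rw [Finsupp.single_le_iff] at hk
  · rw [one_mul, coeff_mvPder, Finsupp.sub_add_single_one_cancel (by omega),
      Finsupp.tsub_apply, Finsupp.single_eq_same, Nat.cast_sub hk, Nat.cast_one, sub_add_cancel]
  · simp [Nat.lt_one_iff.mp (not_le.mp hk)]

/-- The index `i : Fin n` stands for the variable `y_{i+1}`, of weight `i`. -/
theorem euler_equation_coeff_recursion (n : ℕ) (hn : 1 ≤ n)
    (Φ : MvPowerSeries (Fin n) ℂ)
    (hE : (∑ k : Fin n, (k : ℂ) • (MvPowerSeries.X k * mvPder k Φ))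
        - ((n : ℂ) + 1) • mvPder ⟨0, hn⟩ Φ = ((n : ℂ) - 3) • Φ) :
    ∀ m : Fin n →₀ ℕ,
      ((n : ℂ) + 1) * ((m ⟨0, hn⟩ : ℂ) + 1) *
          MvPowerSeries.coeff (m + Finsupp.single ⟨0, hn⟩ 1) Φ =
        (3 - (n : ℂ) + ∑ k : Fin n, (k : ℂ) * (m k : ℂ)) * MvPowerSeries.coeff m Φ := by
  intro m
  have hm := congrArg (MvPowerSeries.coeff m) hE
  simp only [map_sub, map_sum, map_smul, coeff_X_mul_mvPder, coeff_mvPder, smul_eq_mul,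
    ← mul_assoc, ← Finset.sum_mul] at hm
  linear_combination -hm
end
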